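/- arXiv:2601.01462 — 4 statements merged into one kernel-verified Lean document; each statement's English description precedes it below -/
import Mathlib

section
/- For every real s ≥ 0 there exists a constant C > 0, depending only on s, such that for all ε ∈ (0,1) and all λ > 0 one has λ^{s/2} · (−1/ln ε) ∫_ε^{1/ε} e^{−tλ}/t dt ≤ C ε^{−s/2}. -/
/-!
On `[ε, 1/ε]` the integrand is at most `exp (-ελ) / t`, and `∫_ε^{1/ε} dt/t = -2 ln ε` cancels the
prefactor `-1/ln ε`, leaving `2 λ^{s/2} e^{-ελ} = 2 (ελ)^{s/2} e^{-ελ} ε^{-s/2}`. Finally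
`x^a e^{-x}` is bounded on `[0, ∞)` by `⌈a⌉!`, since `x^a ≤ max 1 (x^⌈a⌉)` and `x^n ≤ n! e^x`.
-/

open MeasureTheory Real Nat

lemma rpow_le_natCeil_factorial_mul_exp {a x : ℝ} (ha : 0 ≤ a) (hx : 0 ≤ x) :
    x ^ a ≤ (⌈a⌉₊)! * exp x := by
  have hfac : (1 : ℝ) ≤ (⌈a⌉₊)! := mod_cast Nat.one_le_iff_ne_zero.mpr (Nat.factorial_ne_zero _)
  rcases le_total x 1 with hx1 | hx1
  · calc x ^ a ≤ 1 := rpow_le_one hx hx1 ha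
      _ ≤ (⌈a⌉₊)! * exp x := one_le_mul_of_one_le_of_one_le hfac (one_le_exp hx)
  · calc x ^ a ≤ x ^ (⌈a⌉₊ : ℝ) := rpow_le_rpow_of_exponent_le hx1 (Nat.le_ceil a)
      _ = x ^ ⌈a⌉₊ := rpow_natCast x _
      _ ≤ (⌈a⌉₊)! * exp x := by
        rw [← div_le_iff₀' (by positivity)]
        exact pow_div_factorial_le_exp x hx _

lemma rpow_mul_exp_neg_le_natCeil_factorial {a x : ℝ} (ha : 0 ≤ a) (hx : 0 ≤ x) :
    x ^ a * exp (-x) ≤ (⌈a⌉₊)! := by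
  calc x ^ a * exp (-x) ≤ (⌈a⌉₊)! * exp x * exp (-x) :=
        mul_le_mul_of_nonneg_right (rpow_le_natCeil_factorial_mul_exp ha hx) (exp_pos _).le
    _ = (⌈a⌉₊)! := by rw [mul_assoc, ← exp_add, add_neg_cancel, exp_zero, mul_one]

lemma integral_exp_neg_mul_div_le {a b lam : ℝ} (ha : 0 < a) (hab : a ≤ b) (hlam : 0 ≤ lam) :
    ∫ t in a..b, exp (-(t * lam)) / t ≤ exp (-(a * lam)) * log (b / a) := by
  have hne : ∀ t ∈ Set.uIcc a b, t ≠ 0 := fun t ht =>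
    (ha.trans_le (Set.uIcc_of_le hab ▸ ht).1).ne'
  calc ∫ t in a..b, exp (-(t * lam)) / t ≤ ∫ t in a..b, exp (-(a * lam)) * t⁻¹ := by
        refine intervalIntegral.integral_mono_on hab ?_ ?_ fun t ht => ?_
        · exact (ContinuousOn.div (by fun_prop) continuousOn_id hne).intervalIntegrable
        · exact (continuousOn_const.mul (continuousOn_inv₀.mono
            fun t ht => hne t ht)).intervalIntegrable
        · rw [← div_eq_mul_inv]
          gcongr
          · exact (ha.trans_le ht.1).le
          · exact ht.1
    _ = exp (-(a * lam)) * log (b / a) := by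
        rw [intervalIntegral.integral_const_mul, integral_inv_of_pos ha (ha.trans_le hab)]

/-- For every real `s ≥ 0` there exists `C > 0`, depending only on `s`, such that for all
`ε ∈ (0,1)` and all `λ > 0`,
`λ^(s/2) * (-1/ln ε) * ∫_ε^{1/ε} exp (-tλ)/t dt ≤ C * ε^(-s/2)`. -/
theorem stmt_6 (s : ℝ) (hs : 0 ≤ s) :
    ∃ C : ℝ, 0 < C ∧ ∀ ε ∈ Set.Ioo (0 : ℝ) 1, ∀ lam : ℝ, 0 < lam →
      lam ^ (s / 2) *
          ((-(1 / Real.log ε)) * ∫ t in ε..(1 / ε), Real.exp (-(t * lam)) / t)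
        ≤ C * ε ^ (-(s / 2)) := by
  refine ⟨2 * (⌈s / 2⌉₊)!, by positivity, ?_⟩
  rintro ε ⟨hε0, hε1⟩ lam hlam
  have hlog : log ε < 0 := log_neg hε0 hε1
  have hε_le : ε ≤ 1 / ε := hε1.le.trans (one_le_one_div hε0 hε1.le)
  have hlog_ratio : log (1 / ε / ε) = -(2 * log ε) := by
    rw [div_div, one_div, log_inv, log_mul hε0.ne' hε0.ne']
    ring
  have hscale : lam ^ (s / 2) = (ε * lam) ^ (s / 2) * ε ^ (-(s / 2)) := by
    rw [mul_rpow hε0.le hlam.le, rpow_neg hε0.le]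
    field_simp
  have hprefactor : 0 ≤ -(1 / log ε) := by
    rw [neg_nonneg]; exact (one_div_neg.mpr hlog).le
  calc lam ^ (s / 2) * (-(1 / log ε) * ∫ t in ε..(1 / ε), exp (-(t * lam)) / t)
      ≤ lam ^ (s / 2) * (-(1 / log ε) * (exp (-(ε * lam)) * log (1 / ε / ε))) := by
        gcongr
        exact integral_exp_neg_mul_div_le hε0 hε_le hlam.le
    _ = 2 * ((ε * lam) ^ (s / 2) * exp (-(ε * lam))) * ε ^ (-(s / 2)) := by
        rw [hlog_ratio, hscale]
        field_simp [hlog.ne]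
    _ ≤ 2 * (⌈s / 2⌉₊)! * ε ^ (-(s / 2)) := by
        gcongr 2 * ?_ * _
        exact rpow_mul_exp_neg_le_natCeil_factorial (by positivity) (by positivity)
end

section
/- Let d ≥ 1 be an integer, let c > 0, and let (λ_j)_{j≥1} be a sequence of positive real numbers satisfying λ_j ≥ c j^{2/d} for all j ≥ 1. For ε ∈ (0,1), define κ(ε) = ( ∑_{j=1}^∞ λ_j^{−d} [ (1/ln ε) ∫_ε^{1/ε} (1 − 2 e^{−tλ_j})/(2t) dt ]⁴ )^{1/4}. Then κ(ε) is finite for every ε ∈ (0,1), and κ(ε) → 0 as ε → 0⁺. -/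
open MeasureTheory Filter


lemma pos_of_uIcc1 {a b x : ℝ} (ha : 0 < a) (hb : 0 < b) (hx : x ∈ Set.uIcc a b) : 0 < x :=
  lt_of_lt_of_le (lt_min ha hb) hx.1

lemma half_int' (ε : ℝ) (h0 : 0 < ε) (_h1 : ε < 1) :
    (∫ t in ε..(1/ε), 1 / (2 * t)) = - Real.log ε := by
  have : (fun t : ℝ => 1 / (2*t)) = fun t : ℝ => (1/2) * (1/t) := by
    funext t; ring
  rw [this, intervalIntegral.integral_const_mul, integral_one_div, one_div, one_div,
    Real.log_div (by positivity) (ne_of_gt h0)]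
  · rw [Real.log_inv]; ring
  · intro h
    have h2 : (0:ℝ) < ε ⊓ (1/ε) := lt_min h0 (by positivity)
    exact absurd h.1 (by linarith)

-- coarse bound
lemma coarse' (ε l : ℝ) (h0 : 0 < ε) (h1 : ε < 1) (hl : 0 < l) :
    |∫ t in ε..(1/ε), (1 - 2 * Real.exp (-(t * l))) / (2 * t)| ≤ - Real.log ε := by
  have hεinv : (0:ℝ) < 1/ε := by positivity
  have hint : IntervalIntegrable (fun t => 1 / (2 * t)) volume ε (1/ε) := by
    apply ContinuousOn.intervalIntegrable
    apply ContinuousOn.div (by fun_prop) (by fun_prop)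
    intro x hx
    have := pos_of_uIcc1 h0 hεinv hx
    positivity
  have key : |∫ t in ε..(1/ε), (1 - 2 * Real.exp (-(t * l))) / (2 * t)|
      ≤ |∫ t in ε..(1/ε), 1 / (2 * t)| := by
    rw [← Real.norm_eq_abs]
    apply intervalIntegral.norm_integral_le_abs_of_norm_le _ hint
    filter_upwards [ae_restrict_mem measurableSet_uIoc] with t ht
    have ht0 : 0 < t := by
      rcases Set.mem_uIoc.1 ht with h | h
      · exact lt_trans h0 h.1
      · exact lt_trans (by positivity) h.1
    rw [Real.norm_eq_abs, abs_div, abs_of_pos (by positivity : (0:ℝ) < 2*t)]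
    apply div_le_div_of_nonneg_right ?_ (by positivity)
    have he1 : Real.exp (-(t * l)) < 1 := Real.exp_lt_one_iff.2 (by nlinarith)
    have he0 : 0 < Real.exp (-(t * l)) := Real.exp_pos _
    rw [abs_le]; constructor <;> nlinarith
  rw [half_int' ε h0 h1] at key
  exact key.trans (le_of_eq (abs_of_nonneg (by linarith [Real.log_neg h0 h1])))


lemma II2 (a b l : ℝ) (ha : 0 < a) (hb : 0 < b) :
    IntervalIntegrable (fun t => Real.exp (-(t * l)) / t) volume a b := by
  apply ContinuousOn.intervalIntegrable
  apply ContinuousOn.div (by fun_prop) (by fun_prop)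
  intro x hx
  exact ne_of_gt (pos_of_uIcc1 ha hb hx)

lemma IIdiv (a b : ℝ) (ha : 0 < a) (hb : 0 < b) :
    IntervalIntegrable (fun t => 1 / t) volume a b := by
  apply ContinuousOn.intervalIntegrable
  apply ContinuousOn.div (by fun_prop) (by fun_prop)
  intro x hx
  exact ne_of_gt (pos_of_uIcc1 ha hb hx)

lemma IIsub (a b l : ℝ) (ha : 0 < a) (hb : 0 < b) :
    IntervalIntegrable (fun t => 1 / t - l) volume a b :=
  (IIdiv a b ha hb).sub intervalIntegrable_const

-- ∫_a^b (1/t - l) = log b - log a - l * (b - a)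
lemma int_sub (a b l : ℝ) (ha : 0 < a) (hb : 0 < b) :
    (∫ t in a..b, (1 / t - l)) = Real.log b - Real.log a - l * (b - a) := by
  rw [intervalIntegral.integral_sub (IIdiv a b ha hb) intervalIntegrable_const,
    integral_one_div (fun h => absurd h.1 (not_le.2 (lt_min ha hb))),
    intervalIntegral.integral_const, Real.log_div (ne_of_gt hb) (ne_of_gt ha)]
  simp [smul_eq_mul]
  ring

lemma int_exp_scaled (a b l : ℝ) (hl : 0 < l) :
    (∫ t in a..b, l * Real.exp (-(t * l))) = Real.exp (-(a*l)) - Real.exp (-(b*l)) := by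
  have hder : ∀ t ∈ Set.uIcc a b, HasDerivAt (fun t => -Real.exp (-(t * l)))
      (l * Real.exp (-(t * l))) t := by
    intro t _
    have h1 : HasDerivAt (fun t : ℝ => -(t * l)) (-l) t := by
      simpa using ((hasDerivAt_id t).mul_const l).fun_neg
    have := (Real.hasDerivAt_exp (-(t*l))).comp t h1
    exact this.fun_neg.congr_deriv (by ring)
  rw [intervalIntegral.integral_eq_sub_of_hasDerivAt hder (Continuous.intervalIntegrable (by fun_prop : Continuous fun t : ℝ => l * Real.exp (-(t*l))) _ _)]
  ring

lemma fine (ε l : ℝ) (h0 : 0 < ε) (hl : 0 < l) (hεb : ε ≤ 1/l) (hεl : ε ≤ l) (h1 : ε < 1)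
    (hh : (∫ t in ε..(1/ε), 1 / (2 * t)) = - Real.log ε) :
    |∫ t in ε..(1/ε), (1 - 2 * Real.exp (-(t * l))) / (2 * t)| ≤ |Real.log l| + 1 := by
  set b := 1/l with hb
  have hbpos : 0 < b := by positivity
  have hεinv : (0:ℝ) < 1/ε := by positivity
  have hbε : b ≤ 1/ε := by
    rw [hb]; exact one_div_le_one_div_of_le h0 hεl
  -- split the integrand
  have hsplit : (∫ t in ε..(1/ε), (1 - 2 * Real.exp (-(t * l))) / (2 * t))
      = (∫ t in ε..(1/ε), 1 / (2 * t)) - ∫ t in ε..(1/ε), Real.exp (-(t * l)) / t := by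
    rw [← intervalIntegral.integral_sub (by
        apply ContinuousOn.intervalIntegrable
        apply ContinuousOn.div (by fun_prop) (by fun_prop)
        intro x hx; have := pos_of_uIcc1 h0 hεinv hx; positivity)
      (II2 ε (1/ε) l h0 hεinv)]
    apply intervalIntegral.integral_congr
    intro t ht
    have ht0 : 0 < t := pos_of_uIcc1 h0 hεinv ht
    field_simp
  set I := ∫ t in ε..(1/ε), Real.exp (-(t * l)) / t with hI
  have hIsplit : I = (∫ t in ε..b, Real.exp (-(t * l)) / t)
      + ∫ t in b..(1/ε), Real.exp (-(t * l)) / t :=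
    (intervalIntegral.integral_add_adjacent_intervals (II2 ε b l h0 hbpos)
      (II2 b (1/ε) l hbpos hεinv)).symm
  -- bounds for first piece
  have hlow1 : Real.log b - Real.log ε - 1 ≤ ∫ t in ε..b, Real.exp (-(t * l)) / t := by
    have hmono : (∫ t in ε..b, (1 / t - l)) ≤ ∫ t in ε..b, Real.exp (-(t * l)) / t := by
      apply intervalIntegral.integral_mono_on hεb (IIsub ε b l h0 hbpos) (II2 ε b l h0 hbpos)
      intro t ht
      have ht0 : 0 < t := lt_of_lt_of_le h0 ht.1
      have : 1 - t * l ≤ Real.exp (-(t * l)) := by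
        have := Real.add_one_le_exp (-(t*l)); linarith
      have heq : 1/t - l = (1 - t*l)/t := by field_simp
      rw [heq]
      gcongr
    rw [int_sub ε b l h0 hbpos] at hmono
    have : l * (b - ε) ≤ 1 := by
      rw [hb]; have : l * (1/l) = 1 := mul_one_div_cancel (ne_of_gt hl); nlinarith
    linarith
  have hup1 : (∫ t in ε..b, Real.exp (-(t * l)) / t) ≤ Real.log b - Real.log ε := by
    have hmono : (∫ t in ε..b, Real.exp (-(t * l)) / t) ≤ ∫ t in ε..b, 1 / t := by
      apply intervalIntegral.integral_mono_on hεb (II2 ε b l h0 hbpos) (IIdiv ε b h0 hbpos)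
      intro t ht
      have ht0 : 0 < t := lt_of_lt_of_le h0 ht.1
      gcongr
      exact Real.exp_le_one_iff.2 (by nlinarith)
    rw [integral_one_div (fun h => absurd h.1 (not_le.2 (lt_min h0 hbpos))),
      Real.log_div (ne_of_gt hbpos) (ne_of_gt h0)] at hmono
    linarith
  -- bounds for second piece
  have hlow2 : (0:ℝ) ≤ ∫ t in b..(1/ε), Real.exp (-(t * l)) / t := by
    apply intervalIntegral.integral_nonneg hbε
    intro t ht
    have ht0 : 0 < t := lt_of_lt_of_le hbpos ht.1
    positivity
  have hup2 : (∫ t in b..(1/ε), Real.exp (-(t * l)) / t) ≤ 1 := by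
    have hmono : (∫ t in b..(1/ε), Real.exp (-(t * l)) / t)
        ≤ ∫ t in b..(1/ε), l * Real.exp (-(t * l)) := by
      apply intervalIntegral.integral_mono_on hbε (II2 b (1/ε) l hbpos hεinv) (Continuous.intervalIntegrable (by fun_prop : Continuous fun t : ℝ => l * Real.exp (-(t*l))) _ _)
      intro t ht
      have ht0 : 0 < t := lt_of_lt_of_le hbpos ht.1
      have h1t : 1 / t ≤ l := by
        rw [div_le_iff₀ ht0]
        have : 1/l ≤ t := ht.1
        calc (1:ℝ) = l * (1/l) := (mul_one_div_cancel (ne_of_gt hl)).symm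
        _ ≤ l * t := by nlinarith
      calc Real.exp (-(t * l)) / t = Real.exp (-(t * l)) * (1/t) := by ring
      _ ≤ Real.exp (-(t * l)) * l := by nlinarith [Real.exp_pos (-(t*l))]
      _ = l * Real.exp (-(t * l)) := by ring
    rw [int_exp_scaled b (1/ε) l hl] at hmono
    have hb1 : Real.exp (-(b * l)) ≤ 1 := Real.exp_le_one_iff.2 (by nlinarith)
    linarith [Real.exp_pos (-(1/ε * l))]
  -- combine
  have hlogb : Real.log b = - Real.log l := by rw [hb, one_div, Real.log_inv]
  rw [hsplit, hh, hIsplit]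
  rw [abs_le]
  constructor
  · have := neg_abs_le (Real.log l); nlinarith [hlow1, hup2, hlogb]
  · have := le_abs_self (Real.log l); nlinarith [hup1, hlow2, hlogb]

/-- Let `d ≥ 1` be an integer, `c > 0`, and `(λ_j)_{j≥1}` a sequence of positive reals with
`λ_j ≥ c j^(2/d)` for all `j ≥ 1` (here `lam j` stands for `λ_{j+1}`). For `ε ∈ (0,1)` define
`κ(ε) = (∑_{j≥1} λ_j^{-d} [ (1/ln ε) ∫_ε^{1/ε} (1 - 2 exp (-tλ_j))/(2t) dt ]⁴)^{1/4}`.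
Then `κ(ε)` is finite (the series converges) for every `ε ∈ (0,1)`, and `κ(ε) → 0`
as `ε → 0⁺`. -/
theorem stmt_9 (d : ℕ) (hd : 1 ≤ d) (c : ℝ) (hc : 0 < c) (lam : ℕ → ℝ)
    (hpos : ∀ j, 0 < lam j)
    (hgrow : ∀ j : ℕ, c * ((j : ℝ) + 1) ^ (2 / (d : ℝ)) ≤ lam j) :
    (∀ ε ∈ Set.Ioo (0 : ℝ) 1,
      Summable (fun j : ℕ => (lam j) ^ (-(d : ℝ)) *
        ((1 / Real.log ε) *
          ∫ t in ε..(1 / ε), (1 - 2 * Real.exp (-(t * lam j))) / (2 * t)) ^ 4)) ∧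
    Tendsto (fun ε : ℝ =>
        (∑' j : ℕ, (lam j) ^ (-(d : ℝ)) *
          ((1 / Real.log ε) *
            ∫ t in ε..(1 / ε), (1 - 2 * Real.exp (-(t * lam j))) / (2 * t)) ^ 4)
          ^ ((1 : ℝ) / 4))
      (nhdsWithin 0 (Set.Ioi 0)) (nhds 0) := by
  have hdR : (0:ℝ) < (d:ℝ) := by exact_mod_cast Nat.pos_of_ne_zero (by omega)
  set B : ℕ → ℝ → ℝ := fun j ε => (1 / Real.log ε) *
      ∫ t in ε..(1 / ε), (1 - 2 * Real.exp (-(t * lam j))) / (2 * t) with hB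
  set bound : ℕ → ℝ := fun j => c ^ (-(d : ℝ)) * ((j:ℝ)+1) ^ (-(2:ℝ)) with hbd
  have hbound_sum : Summable bound := by
    apply Summable.mul_left
    have h : Summable (fun n : ℕ => ((n:ℝ)) ^ (-(2:ℝ))) :=
      Real.summable_nat_rpow.mpr (by norm_num)
    have := (summable_nat_add_iff 1).mpr h
    simpa using this
  have hlam_le : ∀ j, lam j ^ (-(d:ℝ)) ≤ bound j := by
    intro j
    have hj1 : (0:ℝ) < (j:ℝ) + 1 := by positivity
    have h1 : (0:ℝ) < c * ((j:ℝ)+1) ^ (2/(d:ℝ)) := by positivity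
    have h2 := Real.rpow_le_rpow_of_nonpos h1 (hgrow j) (by linarith : -(d:ℝ) ≤ 0)
    have hdne : (d:ℝ) ≠ 0 := ne_of_gt hdR
    have hexp : 2/(d:ℝ) * (-(d:ℝ)) = -2 := by field_simp
    rwa [Real.mul_rpow (le_of_lt hc) (by positivity), ← Real.rpow_mul (le_of_lt hj1),
      hexp] at h2
  have hlam_pos : ∀ j, (0:ℝ) < lam j ^ (-(d:ℝ)) := fun j => Real.rpow_pos_of_pos (hpos j) _
  have hB1 : ∀ ε ∈ Set.Ioo (0:ℝ) 1, ∀ j, |B j ε| ≤ 1 := by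
    intro ε hε j
    have hlog : Real.log ε < 0 := Real.log_neg hε.1 hε.2
    rw [hB]
    simp only [abs_mul]
    have h1 : |1 / Real.log ε| = (-Real.log ε)⁻¹ := by
      rw [abs_div, abs_one, abs_of_neg hlog, one_div]
    rw [h1]
    calc (-Real.log ε)⁻¹ * |∫ t in ε..(1/ε), (1 - 2 * Real.exp (-(t * lam j))) / (2 * t)|
        ≤ (-Real.log ε)⁻¹ * (-Real.log ε) := by
          apply mul_le_mul_of_nonneg_left (coarse' ε (lam j) hε.1 hε.2 (hpos j))
          rw [inv_nonneg]; linarith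
      _ = 1 := inv_mul_cancel₀ (by linarith)
  have hterm_bound : ∀ ε ∈ Set.Ioo (0:ℝ) 1, ∀ j,
      ‖lam j ^ (-(d:ℝ)) * (B j ε) ^ 4‖ ≤ bound j := by
    intro ε hε j
    rw [Real.norm_eq_abs, abs_mul, abs_of_pos (hlam_pos j), abs_pow]
    calc lam j ^ (-(d:ℝ)) * |B j ε| ^ 4 ≤ lam j ^ (-(d:ℝ)) * 1 := by
          apply mul_le_mul_of_nonneg_left _ (le_of_lt (hlam_pos j))
          exact pow_le_one₀ (abs_nonneg _) (hB1 ε hε j)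
      _ = lam j ^ (-(d:ℝ)) := mul_one _
      _ ≤ bound j := hlam_le j
  constructor
  · intro ε hε
    exact Summable.of_norm_bounded hbound_sum (hterm_bound ε hε)
  · have htends : ∀ j, Tendsto (fun ε => lam j ^ (-(d:ℝ)) * (B j ε) ^ 4)
        (nhdsWithin 0 (Set.Ioi 0)) (nhds 0) := by
      intro j
      have hBj : Tendsto (fun ε => B j ε) (nhdsWithin 0 (Set.Ioi 0)) (nhds 0) := by
        apply squeeze_zero_norm'
          (a := fun ε => (|Real.log (lam j)| + 1) * (-Real.log ε)⁻¹)
        · have hδ : (0:ℝ) < min (min (lam j) (1/(lam j))) 1 := by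
            have := hpos j; positivity
          filter_upwards [Ioo_mem_nhdsGT hδ] with ε hε
          have h0 : 0 < ε := hε.1
          have h1 : ε < 1 := lt_of_lt_of_le hε.2 (min_le_right _ _)
          have hεl : ε ≤ lam j :=
            le_of_lt (lt_of_lt_of_le hε.2 ((min_le_left _ _).trans (min_le_left _ _)))
          have hεb : ε ≤ 1/(lam j) :=
            le_of_lt (lt_of_lt_of_le hε.2 ((min_le_left _ _).trans (min_le_right _ _)))
          have hlog : Real.log ε < 0 := Real.log_neg h0 h1
          have hfi := fine ε (lam j) h0 (hpos j) hεb hεl h1 (half_int' ε h0 h1)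
          rw [Real.norm_eq_abs, hB]
          simp only [abs_mul]
          have heq : |1 / Real.log ε| = (-Real.log ε)⁻¹ := by
            rw [abs_div, abs_one, abs_of_neg hlog, one_div]
          rw [heq, mul_comm]
          apply mul_le_mul_of_nonneg_right hfi
          rw [inv_nonneg]; linarith
        · have h2 : Tendsto (fun ε : ℝ => (-Real.log ε)⁻¹) (nhdsWithin 0 (Set.Ioi 0)) (nhds 0) := by
            apply Filter.Tendsto.inv_tendsto_atTop
            exact tendsto_neg_atBot_atTop.comp Real.tendsto_log_nhdsGT_zero
          simpa using h2.const_mul (|Real.log (lam j)| + 1)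
      have := (hBj.pow 4).const_mul (lam j ^ (-(d:ℝ)))
      simpa using this
    have hF : Tendsto (fun ε => ∑' j, lam j ^ (-(d:ℝ)) * (B j ε) ^ 4)
        (nhdsWithin 0 (Set.Ioi 0)) (nhds 0) := by
      have hev : ∀ᶠ ε in nhdsWithin 0 (Set.Ioi 0), ∀ j,
          ‖lam j ^ (-(d:ℝ)) * (B j ε) ^ 4‖ ≤ bound j := by
        filter_upwards [Ioo_mem_nhdsGT (by norm_num : (0:ℝ) < 1)] with ε hε
        exact hterm_bound ε hε
      have := tendsto_tsum_of_dominated_convergence hbound_sum htends hev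
      simpa using this
    have hc4 : ContinuousAt (fun x : ℝ => x ^ ((1:ℝ)/4)) 0 :=
      Real.continuousAt_rpow_const 0 _ (Or.inr (by norm_num))
    have h5 := hc4.tendsto.comp hF
    rw [Real.zero_rpow (by norm_num : ((1:ℝ)/4) ≠ 0)] at h5
    exact h5
end

section
/- For every real s ≥ 0 there exists a constant C > 0, depending only on s, such that for every ε ∈ (0,1) and every θ ∈ H, the element J_ε θ belongs to 𝒟(Λ^s) and ‖Λ^s J_ε θ‖ ≤ C ε^{−s/2} ‖θ‖. In particular, J_ε θ ∈ 𝒟(Λ^k) for every k ∈ ℕ. -/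
open MeasureTheory Filter
open scoped ENNReal

variable {H : Type*} [NormedAddCommGroup H] [InnerProductSpace ℝ H] [CompleteSpace H]

/-- The fractional operator `Λ^s` defined spectrally:
`Λ^s h = ∑_j λ_j^{s/2} ⟨h, w_j⟩ w_j`. -/
noncomputable def Lam (lam : ℕ → ℝ) (w : HilbertBasis ℕ ℝ H) (s : ℝ) (h : H) : H :=
  ∑' j, ((lam j) ^ (s / 2) * (inner ℝ (w j) h : ℝ)) • (w j : H)

/-- Membership in the domain `𝒟(Λ^s)`: `∑_j λ_j^s ⟨h, w_j⟩² < ∞`. -/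
def memDom (lam : ℕ → ℝ) (w : HilbertBasis ℕ ℝ H) (s : ℝ) (h : H) : Prop :=
  Summable (fun j : ℕ => (lam j) ^ s * (inner ℝ (w j) h : ℝ) ^ 2)

/-- The heat semigroup `e^{tΔ} θ = ∑_j exp (-t λ_j) ⟨θ, w_j⟩ w_j`. -/
noncomputable def heat (lam : ℕ → ℝ) (w : HilbertBasis ℕ ℝ H) (t : ℝ) (θ : H) : H :=
  ∑' j, (Real.exp (-(t * lam j)) * (inner ℝ (w j) θ : ℝ)) • (w j : H)

/-- The spectral regularizer `J_ε θ = (-1/ln ε) ∫_ε^{1/ε} t⁻¹ e^{tΔ} θ dt`. -/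
noncomputable def Jreg (lam : ℕ → ℝ) (w : HilbertBasis ℕ ℝ H) (ε : ℝ) (θ : H) : H :=
  (-(1 / Real.log ε)) • ∫ t in ε..(1 / ε), t⁻¹ • heat lam w t θ

section Aux

open scoped ENNReal

set_option linter.unusedSectionVars false

lemma aux_summable_sq_repr (w : HilbertBasis ℕ ℝ H) (f : lp (fun _ : ℕ => ℝ) 2) :
    Summable (fun j : ℕ => ‖f j‖ ^ (2:ℝ)) := by
  have := lp.memℓp f
  rw [memℓp_gen_iff (by norm_num : 0 < (2:ℝ≥0∞).toReal)] at this
  simpa using this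

lemma aux_memℓp_of_bound (w : HilbertBasis ℕ ℝ H) (θ : H) (f : ℕ → ℝ) (K : ℝ)
    (hf : ∀ j, |f j| ≤ K * |(w.repr θ) j|) : Memℓp f 2 := by
  refine memℓp_gen ?_
  have h2 : ((2:ℝ≥0∞)).toReal = (2:ℝ) := by norm_num
  rw [h2]
  refine Summable.of_nonneg_of_le (fun j => by positivity)
    (fun j => ?_) (((aux_summable_sq_repr w (w.repr θ))).mul_left (K^2))
  have h3 : ‖f j‖ ≤ K * |(w.repr θ) j| := hf j
  have : ‖f j‖ ^ (2:ℝ) = ‖f j‖^(2:ℕ) := by rw [← Real.rpow_natCast]; norm_num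
  rw [this]
  have : ‖(w.repr θ) j‖ ^ (2:ℝ) = |(w.repr θ) j|^(2:ℕ) := by
    rw [← Real.rpow_natCast]; norm_num [Real.norm_eq_abs]
  rw [this]
  nlinarith [abs_nonneg ((w.repr θ) j), norm_nonneg (f j)]

lemma aux_tsum_eq_repr_symm (w : HilbertBasis ℕ ℝ H) (f : ℕ → ℝ) (hf : Memℓp f 2) :
    (∑' j, f j • (w j : H)) = w.repr.symm ⟨f, hf⟩ :=
  HasSum.tsum_eq (by simpa using w.hasSum_repr_symm ⟨f, hf⟩)

lemma aux_repr_tsum (w : HilbertBasis ℕ ℝ H) (f : ℕ → ℝ) (hf : Memℓp f 2) (i : ℕ) :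
    w.repr (∑' j, f j • (w j : H)) i = f i := by
  rw [aux_tsum_eq_repr_symm w f hf, LinearIsometryEquiv.apply_symm_apply]

lemma aux_heat_memℓp (lam : ℕ → ℝ) (w : HilbertBasis ℕ ℝ H) (hpos : ∀ j, 0 < lam j)
    (θ : H) {t : ℝ} (ht : 0 ≤ t) :
    Memℓp (fun j => Real.exp (-(t * lam j)) * (inner ℝ (w j) θ : ℝ)) 2 := by
  refine aux_memℓp_of_bound w θ _ 1 (fun j => ?_)
  rw [abs_mul, abs_of_pos (Real.exp_pos _), one_mul, w.repr_apply_apply]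
  have h1 : Real.exp (-(t * lam j)) ≤ 1 := by
    rw [Real.exp_le_one_iff]
    have := (hpos j).le
    nlinarith
  nlinarith [abs_nonneg (inner ℝ (w j) θ : ℝ), Real.exp_pos (-(t * lam j))]

lemma aux_heat_repr (lam : ℕ → ℝ) (w : HilbertBasis ℕ ℝ H) (hpos : ∀ j, 0 < lam j)
    (θ : H) {t : ℝ} (ht : 0 ≤ t) (i : ℕ) :
    w.repr (heat lam w t θ) i = Real.exp (-(t * lam i)) * w.repr θ i := by
  rw [w.repr_apply_apply θ i]
  exact aux_repr_tsum w _ (aux_heat_memℓp lam w hpos θ ht) i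

lemma aux_heat_contOn (lam : ℕ → ℝ) (w : HilbertBasis ℕ ℝ H) (hpos : ∀ j, 0 < lam j) (θ : H) :
    ContinuousOn (fun t => heat lam w t θ) (Set.Ici (0:ℝ)) := by
  intro t₀ ht₀
  rw [ContinuousWithinAt, tendsto_iff_dist_tendsto_zero]
  set c : ℕ → ℝ := fun j => w.repr θ j with hc
  set F : ℝ → ℝ := fun t => ∑' j, (Real.exp (-(t * lam j)) * c j
      - Real.exp (-(t₀ * lam j)) * c j) ^ 2 with hF
  have hcsq : Summable (fun j => c j ^ 2) := by
    have := aux_summable_sq_repr w (w.repr θ)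
    refine this.congr (fun j => ?_)
    simp [hc, Real.norm_eq_abs, sq_abs]
  have key : ∀ t ∈ Set.Ici (0:ℝ),
      dist (heat lam w t θ) (heat lam w t₀ θ) = (F t) ^ (1/2:ℝ) := by
    intro t ht
    rw [← w.repr.dist_map, dist_eq_norm,
      lp.norm_eq_tsum_rpow (by norm_num : 0 < (2:ℝ≥0∞).toReal)]
    norm_num
    congr 1
    refine tsum_congr (fun j => ?_)
    rw [aux_heat_repr lam w hpos θ ht j, aux_heat_repr lam w hpos θ ht₀ j]
  have hFtendsto : Tendsto F (nhdsWithin t₀ (Set.Ici 0)) (nhds 0) := by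
    have main : Tendsto F (nhdsWithin t₀ (Set.Ici 0)) (nhds (∑' _ : ℕ, (0:ℝ))) := by
      refine tendsto_tsum_of_dominated_convergence (bound := fun j => 4 * c j ^ 2)
        (hcsq.mul_left 4) (fun k => ?_) ?_
      · have hcont : Continuous (fun t => (Real.exp (-(t * lam k)) * c k
            - Real.exp (-(t₀ * lam k)) * c k) ^ 2) := by fun_prop
        have := (hcont.tendsto t₀).mono_left (nhdsWithin_le_nhds (s := Set.Ici 0))
        simpa using this
      · filter_upwards [self_mem_nhdsWithin] with t ht
        intro k
        have e1 : Real.exp (-(t * lam k)) ≤ 1 := by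
          rw [Real.exp_le_one_iff]; nlinarith [(hpos k).le, Set.mem_Ici.mp ht]
        have e2 : Real.exp (-(t₀ * lam k)) ≤ 1 := by
          rw [Real.exp_le_one_iff]; nlinarith [(hpos k).le, Set.mem_Ici.mp ht₀]
        have p1 := Real.exp_pos (-(t * lam k))
        have p2 := Real.exp_pos (-(t₀ * lam k))
        have hab : (Real.exp (-(t * lam k)) - Real.exp (-(t₀ * lam k)))^2 ≤ 4 := by nlinarith
        have hmul := mul_le_mul_of_nonneg_right hab (sq_nonneg (c k))
        rw [Real.norm_eq_abs, abs_of_nonneg (sq_nonneg _)]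
        nlinarith [hmul]
    simpa using main
  have hroot : Tendsto (fun t => (F t) ^ (1/2:ℝ)) (nhdsWithin t₀ (Set.Ici 0)) (nhds 0) := by
    have hcont : ContinuousAt (fun x : ℝ => x ^ (1/2:ℝ)) 0 :=
      Real.continuousAt_rpow_const 0 (1/2) (Or.inr (by norm_num))
    have := hcont.tendsto.comp hFtendsto
    simpa [Function.comp_def, Real.zero_rpow (by norm_num : (1/2:ℝ) ≠ 0)] using this
  refine Tendsto.congr' ?_ hroot
  filter_upwards [self_mem_nhdsWithin] with t ht
  exact (key t ht).symm

lemma aux_eps_le_inv {ε : ℝ} (hε : ε ∈ Set.Ioo (0:ℝ) 1) : ε ≤ 1/ε := by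
  obtain ⟨h0, h1⟩ := hε
  rw [le_div_iff₀ h0]
  nlinarith

lemma aux_uIcc_subset_Ici {ε : ℝ} (hε : ε ∈ Set.Ioo (0:ℝ) 1) :
    Set.uIcc ε (1/ε) ⊆ Set.Ici (0:ℝ) := by
  rw [Set.uIcc_of_le (aux_eps_le_inv hε)]
  exact fun x hx => le_trans hε.1.le hx.1

lemma aux_Jreg_intble (lam : ℕ → ℝ) (w : HilbertBasis ℕ ℝ H) (hpos : ∀ j, 0 < lam j)
    {ε : ℝ} (hε : ε ∈ Set.Ioo (0:ℝ) 1) (θ : H) :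
    IntervalIntegrable (fun t => t⁻¹ • heat lam w t θ) volume ε (1/ε) := by
  refine ContinuousOn.intervalIntegrable ?_
  refine ContinuousOn.smul ?_ ((aux_heat_contOn lam w hpos θ).mono (aux_uIcc_subset_Ici hε))
  refine ContinuousOn.inv₀ continuousOn_id (fun x hx => ?_)
  rw [Set.uIcc_of_le (aux_eps_le_inv hε)] at hx
  exact ne_of_gt (lt_of_lt_of_le hε.1 hx.1)

lemma aux_Jreg_repr (lam : ℕ → ℝ) (w : HilbertBasis ℕ ℝ H) (hpos : ∀ j, 0 < lam j)
    {ε : ℝ} (hε : ε ∈ Set.Ioo (0:ℝ) 1) (θ : H) (i : ℕ) :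
    w.repr (Jreg lam w ε θ) i
      = ((-(1/Real.log ε)) * ∫ t in ε..(1/ε), t⁻¹ * Real.exp (-(t * lam i)))
          * w.repr θ i := by
  unfold Jreg
  rw [_root_.map_smul]
  have happ : ∀ (a : ℝ) (f : lp (fun _ : ℕ => ℝ) 2), (a • f) i = a * f i := by
    intro a f; rw [lp.coeFn_smul]; rfl
  rw [happ]
  have hswap := ContinuousLinearMap.intervalIntegral_comp_comm (innerSL ℝ (w i))
    (aux_Jreg_intble lam w hpos hε θ)
  have hrepr_int : w.repr (∫ t in ε..(1/ε), t⁻¹ • heat lam w t θ) i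
      = ∫ t in ε..(1/ε), (t⁻¹ * Real.exp (-(t * lam i))) * w.repr θ i := by
    simp only [innerSL_apply_apply] at hswap
    rw [w.repr_apply_apply, ← hswap]
    refine intervalIntegral.integral_congr (fun t ht => ?_)
    have ht0 : 0 ≤ t := aux_uIcc_subset_Ici hε ht
    simp only [innerSL_apply_apply, real_inner_smul_right]
    rw [← w.repr_apply_apply, aux_heat_repr lam w hpos θ ht0 i]
    ring
  rw [hrepr_int, intervalIntegral.integral_mul_const]
  ring

lemma aux_rpow_exp_bound (r : ℝ) (hr : 0 ≤ r) :
    ∃ B : ℝ, 0 < B ∧ ∀ y : ℝ, 0 ≤ y → y ^ r * Real.exp (-y) ≤ B := by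
  set n := ⌈r⌉₊ with hn
  refine ⟨1 + n.factorial, by positivity, fun y hy => ?_⟩
  rcases le_or_gt y 1 with h1 | h1
  · have h2 : y ^ r ≤ 1 := Real.rpow_le_one hy h1 hr
    have h3 : Real.exp (-y) ≤ 1 := Real.exp_le_one_iff.2 (by linarith)
    nlinarith [Real.exp_pos (-y), Real.rpow_nonneg hy r,
      Nat.one_le_iff_ne_zero.2 n.factorial_ne_zero]
  · have h2 : y ^ r ≤ y ^ (n : ℝ) :=
      Real.rpow_le_rpow_of_exponent_le h1.le (Nat.le_ceil r)
    have h3 : y ^ (n:ℝ) = y ^ n := Real.rpow_natCast y n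
    have h4 : y ^ n ≤ n.factorial * Real.exp y := by
      have h5 : y ^ n / n.factorial ≤ Real.exp y :=
        le_trans (Finset.single_le_sum (f := fun i => y ^ i / i.factorial)
          (fun i _ => by positivity) (Finset.self_mem_range_succ n))
          (Real.sum_le_exp_of_nonneg hy (n+1))
      have h6 : (0:ℝ) < n.factorial := by positivity
      rw [div_le_iff₀ h6] at h5
      linarith
    have h7 : y ^ r * Real.exp (-y) ≤ (n.factorial * Real.exp y) * Real.exp (-y) := by
      have := Real.exp_pos (-y)
      nlinarith [h3 ▸ h2]
    rw [mul_assoc, ← Real.exp_add] at h7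
    simpa using h7.trans (by simp)

open intervalIntegral in
lemma aux_g_bound (r : ℝ) (hr : 0 ≤ r) :
    ∃ K : ℝ, 0 < K ∧ ∀ lamj : ℝ, 0 < lamj → ∀ ε ∈ Set.Ioo (0:ℝ) 1,
      0 ≤ (-(1/Real.log ε)) * ∫ t in ε..(1/ε), t⁻¹ * Real.exp (-(t * lamj)) ∧
      lamj ^ r * ((-(1/Real.log ε)) * ∫ t in ε..(1/ε), t⁻¹ * Real.exp (-(t * lamj)))
        ≤ K * ε ^ (-r) := by
  obtain ⟨B, hB, hBle⟩ := aux_rpow_exp_bound r hr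
  refine ⟨2 * B, by positivity, fun lamj hl ε hε => ?_⟩
  obtain ⟨hε0, hε1⟩ := hε
  have hinv : (0:ℝ) < 1/ε := by positivity
  have hle : ε ≤ 1/ε := by rw [le_div_iff₀ hε0]; nlinarith
  have hlog : Real.log ε < 0 := Real.log_neg hε0 hε1
  have hneg : 0 < -(1/Real.log ε) := by
    rw [neg_pos]; exact div_neg_of_pos_of_neg one_pos hlog
  have huIcc : Set.uIcc ε (1/ε) = Set.Icc ε (1/ε) := Set.uIcc_of_le hle
  have hci : ContinuousOn (fun t : ℝ => t⁻¹ * Real.exp (-(t * lamj)))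
      (Set.uIcc ε (1/ε)) := by
    refine ContinuousOn.mul (ContinuousOn.inv₀ continuousOn_id fun x hx => ?_) (by fun_prop)
    rw [huIcc] at hx
    exact (lt_of_lt_of_le hε0 hx.1).ne'
  have hI0 : 0 ≤ ∫ t in ε..(1/ε), t⁻¹ * Real.exp (-(t * lamj)) := by
    refine intervalIntegral.integral_nonneg hle (fun t ht => ?_)
    have ht0 : 0 < t := lt_of_lt_of_le hε0 ht.1
    positivity
  refine ⟨mul_nonneg hneg.le hI0, ?_⟩
  have hki : ContinuousOn (fun t : ℝ => lamj ^ r * (t⁻¹ * Real.exp (-(t * lamj))))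
      (Set.uIcc ε (1/ε)) := (continuousOn_const).mul hci
  have hc2 : ContinuousOn (fun t : ℝ => (B * ε ^ (-r)) * t⁻¹) (Set.uIcc ε (1/ε)) := by
    refine (continuousOn_const).mul (ContinuousOn.inv₀ continuousOn_id fun x hx => ?_)
    rw [huIcc] at hx
    exact (lt_of_lt_of_le hε0 hx.1).ne'
  have hptwise : ∀ t ∈ Set.Icc ε (1/ε),
      lamj ^ r * (t⁻¹ * Real.exp (-(t * lamj))) ≤ (B * ε ^ (-r)) * t⁻¹ := by
    intro t ht
    have ht0 : 0 < t := lt_of_lt_of_le hε0 ht.1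
    have h1 : (t * lamj) ^ r * Real.exp (-(t * lamj)) ≤ B :=
      hBle _ (by positivity)
    have h2 : (t * lamj) ^ r = t ^ r * lamj ^ r := Real.mul_rpow ht0.le hl.le
    have h3 : t ^ (-r) ≤ ε ^ (-r) :=
      Real.rpow_le_rpow_of_nonpos hε0 ht.1 (by linarith)
    have ht1 : t ^ r * t ^ (-r) = 1 := by
      rw [← Real.rpow_add ht0]; simp
    have h4 : lamj ^ r * Real.exp (-(t * lamj))
        = ((t * lamj) ^ r * Real.exp (-(t * lamj))) * t ^ (-r) := by
      rw [h2]
      linear_combination (-(lamj ^ r * Real.exp (-(t * lamj)))) * ht1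
    have h5 : lamj ^ r * Real.exp (-(t * lamj)) ≤ B * ε ^ (-r) := by
      rw [h4]
      exact mul_le_mul h1 h3 (Real.rpow_nonneg ht0.le _) hB.le
    calc lamj ^ r * (t⁻¹ * Real.exp (-(t * lamj)))
        = (lamj ^ r * Real.exp (-(t * lamj))) * t⁻¹ := by ring
      _ ≤ (B * ε ^ (-r)) * t⁻¹ :=
          mul_le_mul_of_nonneg_right h5 (by positivity)
  have hmono := intervalIntegral.integral_mono_on hle
    (hki.intervalIntegrable (μ := volume)) (hc2.intervalIntegrable (μ := volume)) hptwise
  rw [intervalIntegral.integral_const_mul, intervalIntegral.integral_const_mul] at hmono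
  have hintinv : ∫ t in ε..(1/ε), t⁻¹ = -2 * Real.log ε := by
    rw [integral_inv_of_pos hε0 hinv,
      show (1/ε)/ε = (ε*ε)⁻¹ from by field_simp, Real.log_inv,
      Real.log_mul hε0.ne' hε0.ne']
    ring
  rw [hintinv] at hmono
  have hfin : -(1/Real.log ε) * (B * ε ^ (-r) * (-2 * Real.log ε))
      = 2 * B * ε ^ (-r) := by
    field_simp
    ring_nf
    rw [mul_inv_cancel₀ hlog.ne]
  calc lamj ^ r * (-(1/Real.log ε) * ∫ t in ε..(1/ε), t⁻¹ * Real.exp (-(t * lamj)))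
      = -(1/Real.log ε) * (lamj ^ r * ∫ t in ε..(1/ε), t⁻¹ * Real.exp (-(t * lamj))) := by
        ring
    _ ≤ -(1/Real.log ε) * (B * ε ^ (-r) * (-2 * Real.log ε)) :=
        mul_le_mul_of_nonneg_left hmono hneg.le
    _ = 2 * B * ε ^ (-r) := hfin

/-- Central coefficient bound. -/
lemma aux_coeff_bound (lam : ℕ → ℝ) (w : HilbertBasis ℕ ℝ H) (hpos : ∀ j, 0 < lam j)
    (r : ℝ) (hr : 0 ≤ r) :
    ∃ K : ℝ, 0 < K ∧ ∀ ε ∈ Set.Ioo (0:ℝ) 1, ∀ θ : H, ∀ j : ℕ,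
      |lam j ^ r * w.repr (Jreg lam w ε θ) j| ≤ (K * ε ^ (-r)) * |w.repr θ j| := by
  obtain ⟨K, hK, hKle⟩ := aux_g_bound r hr
  refine ⟨K, hK, fun ε hε θ j => ?_⟩
  obtain ⟨hg0, hgle⟩ := hKle (lam j) (hpos j) ε hε
  rw [aux_Jreg_repr lam w hpos hε θ j]
  set g : ℝ := (-(1/Real.log ε)) * ∫ t in ε..(1/ε), t⁻¹ * Real.exp (-(t * lam j)) with hg
  have h1 : |lam j ^ r * (g * w.repr θ j)| = (lam j ^ r * g) * |w.repr θ j| := by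
    rw [show lam j ^ r * (g * w.repr θ j) = (lam j ^ r * g) * w.repr θ j from by ring,
      abs_mul, abs_of_nonneg (mul_nonneg (Real.rpow_nonneg (hpos j).le r) hg0)]
  rw [h1]
  exact mul_le_mul_of_nonneg_right hgle (abs_nonneg _)

end Aux

/-- For every real `s ≥ 0` there is `C > 0` (depending only on `s`) such that for every
`ε ∈ (0,1)` and every `θ ∈ H`, `J_ε θ ∈ 𝒟(Λ^s)` and `‖Λ^s J_ε θ‖ ≤ C ε^{-s/2} ‖θ‖`.
In particular `J_ε θ ∈ 𝒟(Λ^k)` for every `k ∈ ℕ`. -/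
theorem stmt_12 (lam : ℕ → ℝ) (w : HilbertBasis ℕ ℝ H)
    (hpos : ∀ j, 0 < lam j) (hmono : Monotone lam)
    (htop : Tendsto lam atTop atTop)
    (s : ℝ) (hs : 0 ≤ s) :
    ∃ C : ℝ, 0 < C ∧ ∀ ε ∈ Set.Ioo (0 : ℝ) 1, ∀ θ : H,
      memDom lam w s (Jreg lam w ε θ) ∧
      ‖Lam lam w s (Jreg lam w ε θ)‖ ≤ C * ε ^ (-(s / 2)) * ‖θ‖ ∧
      ∀ k : ℕ, memDom lam w (k : ℝ) (Jreg lam w ε θ) := by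
  classical
  -- general memDom lemma
  have memdom : ∀ σ : ℝ, 0 ≤ σ → ∀ ε ∈ Set.Ioo (0:ℝ) 1, ∀ θ : H,
      memDom lam w σ (Jreg lam w ε θ) := by
    intro σ hσ ε hε θ
    obtain ⟨K, hK, hKle⟩ := aux_coeff_bound lam w hpos (σ/2) (by linarith)
    unfold memDom
    have hsum : Summable (fun j : ℕ => ((K * ε ^ (-(σ/2))) * |w.repr θ j|) ^ 2) := by
      have := aux_summable_sq_repr w (w.repr θ)
      have h2 : Summable (fun j : ℕ => |w.repr θ j| ^ 2) := by
        refine this.congr (fun j => ?_)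
        simp [Real.norm_eq_abs, sq_abs]
      have := h2.mul_left ((K * ε ^ (-(σ/2))) ^ 2)
      refine this.congr (fun j => ?_)
      ring
    refine Summable.of_nonneg_of_le (fun j => ?_) (fun j => ?_) hsum
    · have := (hpos j).le
      positivity
    · have hb := hKle ε hε θ j
      rw [← w.repr_apply_apply (Jreg lam w ε θ) j]
      have hrw : lam j ^ σ * w.repr (Jreg lam w ε θ) j ^ 2
          = (lam j ^ (σ/2) * w.repr (Jreg lam w ε θ) j) ^ 2 := by
        have : (lam j ^ (σ/2)) ^ 2 = lam j ^ σ := by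
          rw [sq, ← Real.rpow_add (hpos j)]
          norm_num
        nlinarith [this]
      rw [hrw]
      calc (lam j ^ (σ/2) * w.repr (Jreg lam w ε θ) j) ^ 2
          = |lam j ^ (σ/2) * w.repr (Jreg lam w ε θ) j| ^ 2 := (sq_abs _).symm
        _ ≤ ((K * ε ^ (-(σ/2))) * |w.repr θ j|) ^ 2 := by
            have h0 : (0:ℝ) ≤ |lam j ^ (σ/2) * w.repr (Jreg lam w ε θ) j| := abs_nonneg _
            nlinarith [hKle ε hε θ j]
  obtain ⟨K, hK, hKle⟩ := aux_coeff_bound lam w hpos (s/2) (by linarith)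
  refine ⟨K, hK, fun ε hε θ => ?_⟩
  refine ⟨memdom s hs ε hε θ, ?_, fun k => memdom (k:ℝ) (Nat.cast_nonneg k) ε hε θ⟩
  -- the norm bound
  set a : ℕ → ℝ := fun j => lam j ^ (s/2) * (inner ℝ (w j) (Jreg lam w ε θ) : ℝ) with ha
  have hab : ∀ j, |a j| ≤ (K * ε ^ (-(s/2))) * |w.repr θ j| := by
    intro j
    have := hKle ε hε θ j
    rw [ha]
    simpa [w.repr_apply_apply] using this
  have hamem : Memℓp a 2 := aux_memℓp_of_bound w θ a (K * ε ^ (-(s/2))) (fun j => by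
    have := hab j
    calc |a j| ≤ (K * ε ^ (-(s/2))) * |w.repr θ j| := this
      _ = (K * ε ^ (-(s/2))) * |w.repr θ j| := rfl)
  have hLam : Lam lam w s (Jreg lam w ε θ) = w.repr.symm ⟨a, hamem⟩ := by
    unfold Lam
    rw [show s / 2 = s/2 from rfl]
    exact aux_tsum_eq_repr_symm w a hamem
  have hnorm : ‖Lam lam w s (Jreg lam w ε θ)‖
      = (∑' j, ‖a j‖ ^ (2:ℝ)) ^ (1/2:ℝ) := by
    rw [hLam, ← LinearIsometryEquiv.norm_map w.repr, LinearIsometryEquiv.apply_symm_apply,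
      lp.norm_eq_tsum_rpow (by norm_num : 0 < (2:ℝ≥0∞).toReal)]
    norm_num
  have hnormθ : ‖θ‖ = (∑' j, ‖w.repr θ j‖ ^ (2:ℝ)) ^ (1/2:ℝ) := by
    rw [← LinearIsometryEquiv.norm_map w.repr,
      lp.norm_eq_tsum_rpow (by norm_num : 0 < (2:ℝ≥0∞).toReal)]
    norm_num
  set Q : ℝ := K * ε ^ (-(s/2)) with hQ
  have hQ0 : 0 < Q := by
    have : (0:ℝ) < ε ^ (-(s/2)) := Real.rpow_pos_of_pos hε.1 _
    positivity
  have hsuma : Summable (fun j => ‖a j‖ ^ (2:ℝ)) := by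
    have := lp.memℓp (⟨a, hamem⟩ : lp (fun _ : ℕ => ℝ) 2)
    rw [memℓp_gen_iff (by norm_num : 0 < (2:ℝ≥0∞).toReal)] at this
    simpa using this
  have hsumθ : Summable (fun j => Q ^ 2 * ‖w.repr θ j‖ ^ (2:ℝ)) :=
    (aux_summable_sq_repr w (w.repr θ)).mul_left _
  have htsum_le : (∑' j, ‖a j‖ ^ (2:ℝ)) ≤ Q ^ 2 * ∑' j, ‖w.repr θ j‖ ^ (2:ℝ) := by
    rw [← tsum_mul_left]
    refine Summable.tsum_le_tsum (fun j => ?_) hsuma hsumθ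
    have h1 := hab j
    have h2 : ‖a j‖ ^ (2:ℝ) = |a j| ^ 2 := by
      rw [← Real.rpow_natCast]; norm_num [Real.norm_eq_abs]
    have h3 : ‖w.repr θ j‖ ^ (2:ℝ) = |w.repr θ j| ^ 2 := by
      rw [← Real.rpow_natCast]; norm_num [Real.norm_eq_abs]
    rw [h2, h3]
    nlinarith [abs_nonneg (a j), abs_nonneg (w.repr θ j), hQ0.le]
  have hfinal : (∑' j, ‖a j‖ ^ (2:ℝ)) ^ (1/2:ℝ)
      ≤ Q * (∑' j, ‖w.repr θ j‖ ^ (2:ℝ)) ^ (1/2:ℝ) := by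
    have hT2 : (0:ℝ) ≤ ∑' j, ‖w.repr θ j‖ ^ (2:ℝ) :=
      tsum_nonneg (fun j => by positivity)
    have h1 : (∑' j, ‖a j‖ ^ (2:ℝ)) ^ (1/2:ℝ)
        ≤ (Q ^ 2 * ∑' j, ‖w.repr θ j‖ ^ (2:ℝ)) ^ (1/2:ℝ) :=
      Real.rpow_le_rpow (tsum_nonneg (fun j => by positivity)) htsum_le (by norm_num)
    have h2 : (Q ^ 2 * ∑' j, ‖w.repr θ j‖ ^ (2:ℝ)) ^ (1/2:ℝ)
        = Q * (∑' j, ‖w.repr θ j‖ ^ (2:ℝ)) ^ (1/2:ℝ) := by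
      rw [Real.mul_rpow (by positivity) hT2]
      congr 1
      rw [← Real.rpow_natCast Q 2, ← Real.rpow_mul hQ0.le]
      norm_num
    rw [h2] at h1
    exact h1
  rw [hnorm, hnormθ]
  calc (∑' j, ‖a j‖ ^ (2:ℝ)) ^ (1/2:ℝ)
      ≤ Q * (∑' j, ‖w.repr θ j‖ ^ (2:ℝ)) ^ (1/2:ℝ) := hfinal
    _ = K * ε ^ (-(s/2)) * (∑' j, ‖w.repr θ j‖ ^ (2:ℝ)) ^ (1/2:ℝ) := by rw [hQ]
end

section
/- Let d ≥ 1 be an integer and suppose there exists c > 0 such that λ_j ≥ c j^{2/d} for all j ≥ 1. Let s ≥ 0 be a real number. Then there exists a function κ : (0,1) → [0, ∞) with κ(ε) → 0 as ε → 0⁺ such that for every ε ∈ (0,1) and every f ∈ 𝒟(Λ^{2s+d}), one has ‖Λ^s (J_ε f − f)‖ ≤ κ(ε) ‖f‖^{1/2} ‖Λ^{2s+d} f‖^{1/2}. -/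
open MeasureTheory Filter

variable {H : Type*} [NormedAddCommGroup H] [InnerProductSpace ℝ H] [CompleteSpace H]

namespace Stmt17Aux

open scoped ENNReal NNReal
set_option linter.unusedSectionVars false
set_option linter.unusedVariables false

/-! ### lp-machinery -/

section core
variable {H : Type*} [NormedAddCommGroup H] [InnerProductSpace ℝ H] [CompleteSpace H]

lemma memlp_of_sq_summable {b : ℕ → ℝ} (hb : Summable fun j => (b j)^2) :
    Memℓp b (2 : ℝ≥0∞) := by
  apply memℓp_gen
  have : ∀ i, ‖b i‖ ^ (2 : ℝ≥0∞).toReal = (b i) ^ 2 := by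
    intro i
    rw [show (2 : ℝ≥0∞).toReal = ((2:ℕ):ℝ) by simp, Real.rpow_natCast, Real.norm_eq_abs, sq_abs]
  simpa [this] using hb

noncomputable def toLp (b : ℕ → ℝ) (hb : Summable fun j => (b j)^2) :
    lp (fun _ : ℕ => ℝ) 2 := ⟨b, memlp_of_sq_summable hb⟩

@[simp] lemma toLp_apply (b : ℕ → ℝ) (hb) (j : ℕ) : (toLp b hb : ∀ _ : ℕ, ℝ) j = b j := rfl

lemma norm_toLp_sq (b : ℕ → ℝ) (hb) : ‖toLp b hb‖ ^ 2 = ∑' j, (b j)^2 := by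
  have h2 : (0:ℝ) < (2 : ℝ≥0∞).toReal := by simp
  have := lp.norm_rpow_eq_tsum h2 (toLp b hb)
  have e : ∀ x : ℝ, x ^ (2 : ℝ≥0∞).toReal = x ^ 2 := by
    intro x
    rw [show (2 : ℝ≥0∞).toReal = ((2:ℕ):ℝ) by simp, Real.rpow_natCast]
  rw [e] at this
  rw [this]
  congr 1; ext j
  rw [toLp_apply, e, Real.norm_eq_abs, sq_abs]

variable (w : HilbertBasis ℕ ℝ H)

noncomputable def vec (b : ℕ → ℝ) (hb : Summable fun j => (b j)^2) : H :=
  w.repr.symm (toLp b hb)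

lemma hasSum_vec (b : ℕ → ℝ) (hb) : HasSum (fun j => b j • (w j : H)) (vec w b hb) :=
  w.hasSum_repr_symm (toLp b hb)

lemma inner_vec (b : ℕ → ℝ) (hb) (j : ℕ) : (inner ℝ (w j) (vec w b hb) : ℝ) = b j := by
  rw [← w.repr_apply_apply, vec, LinearIsometryEquiv.apply_symm_apply, toLp_apply]

lemma norm_vec_sq (b : ℕ → ℝ) (hb) : ‖vec w b hb‖ ^ 2 = ∑' j, (b j)^2 := by
  rw [vec, LinearIsometryEquiv.norm_map]
  exact norm_toLp_sq b hb

lemma norm_vec (b : ℕ → ℝ) (hb) : ‖vec w b hb‖ = Real.sqrt (∑' j, (b j)^2) := by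
  rw [← norm_vec_sq w b hb, Real.sqrt_sq (norm_nonneg _)]

lemma coef_sq_summable (f : H) : Summable fun j => ((inner ℝ (w j) f : ℝ))^2 := by
  have h2 : (0:ℝ) < (2 : ℝ≥0∞).toReal := by simp
  have := (lp.memℓp (w.repr f)).summable h2
  have e : ∀ x : ℝ, ‖x‖ ^ (2 : ℝ≥0∞).toReal = x ^ 2 := by
    intro x
    rw [show (2 : ℝ≥0∞).toReal = ((2:ℕ):ℝ) by simp, Real.rpow_natCast, Real.norm_eq_abs, sq_abs]
  simp only [e] at this
  refine this.congr fun j => ?_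
  rw [w.repr_apply_apply]

lemma norm_sq_eq_tsum (f : H) : ‖f‖ ^ 2 = ∑' j, ((inner ℝ (w j) f : ℝ))^2 := by
  have : f = vec w (fun j => (inner ℝ (w j) f : ℝ)) (coef_sq_summable w f) := by
    refine ((hasSum_vec w _ _).unique ?_).symm
    simpa only [w.repr_apply_apply] using w.hasSum_repr f
  conv_lhs => rw [this]
  rw [norm_vec_sq]

lemma vec_sub (b b' : ℕ → ℝ) (hb hb') (hbb' : Summable fun j => (b j - b' j)^2) :
    vec w (fun j => b j - b' j) hbb' = vec w b hb - vec w b' hb' :=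
  HasSum.unique (hasSum_vec w _ hbb')
    (by simpa [sub_smul] using (hasSum_vec w b hb).sub (hasSum_vec w b' hb'))

end core

/-! ### heat semigroup coefficients and continuity -/

section heat
variable {H : Type*} [NormedAddCommGroup H] [InnerProductSpace ℝ H] [CompleteSpace H]
variable (lam : ℕ → ℝ) (w : HilbertBasis ℕ ℝ H) (hpos : ∀ j, 0 < lam j)
include hpos

lemma exp_le_one_aux (t : ℝ) (ht : 0 ≤ t) (j : ℕ) : Real.exp (-(t * lam j)) ≤ 1 := by
  rw [Real.exp_le_one_iff]
  exact neg_nonpos.mpr (mul_nonneg ht (hpos j).le)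

lemma exp_diff_sq_le (t t₀ : ℝ) (ht : 0 ≤ t) (ht₀ : 0 ≤ t₀) (j : ℕ) (x : ℝ) :
    ((Real.exp (-(t * lam j)) - Real.exp (-(t₀ * lam j))) * x)^2 ≤ x^2 := by
  rw [mul_pow]
  refine mul_le_of_le_one_left (sq_nonneg x) ?_
  rw [sq_le_one_iff_abs_le_one, abs_le]
  have h1 := exp_le_one_aux lam hpos t ht j
  have h2 := exp_le_one_aux lam hpos t₀ ht₀ j
  have h3 : 0 < Real.exp (-(t * lam j)) := Real.exp_pos _
  have h4 : 0 < Real.exp (-(t₀ * lam j)) := Real.exp_pos _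
  constructor <;> linarith

lemma heat_coef_summable (t : ℝ) (ht : 0 ≤ t) (f : H) :
    Summable fun j => (Real.exp (-(t * lam j)) * (inner ℝ (w j) f : ℝ))^2 := by
  refine (coef_sq_summable w f).of_nonneg_of_le (fun j => sq_nonneg _) fun j => ?_
  rw [mul_pow]
  refine mul_le_of_le_one_left (sq_nonneg _) ?_
  rw [sq_le_one_iff_abs_le_one, abs_le]
  have h1 := exp_le_one_aux lam hpos t ht j
  have h3 : 0 < Real.exp (-(t * lam j)) := Real.exp_pos _
  constructor <;> linarith

lemma heat_eq (t : ℝ) (ht : 0 ≤ t) (f : H) :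
    heat lam w t f =
      vec w (fun j => Real.exp (-(t * lam j)) * (inner ℝ (w j) f : ℝ))
        (heat_coef_summable lam w hpos t ht f) :=
  (hasSum_vec w _ _).tsum_eq

lemma inner_heat (t : ℝ) (ht : 0 ≤ t) (f : H) (j : ℕ) :
    (inner ℝ (w j) (heat lam w t f) : ℝ) = Real.exp (-(t * lam j)) * (inner ℝ (w j) f : ℝ) := by
  rw [heat_eq lam w hpos t ht f, inner_vec]

lemma continuousOn_heat (f : H) :
    ContinuousOn (fun t => heat lam w t f) (Set.Ioi (0:ℝ)) := by
  intro t₀ ht₀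
  have ht₀' : (0:ℝ) < t₀ := ht₀
  rw [ContinuousWithinAt, tendsto_iff_norm_sub_tendsto_zero]
  set a : ℕ → ℝ := fun j => (inner ℝ (w j) f : ℝ) with ha
  have key : Tendsto
      (fun t => ∑' j, ((Real.exp (-(t * lam j)) - Real.exp (-(t₀ * lam j))) * a j)^2)
      (nhdsWithin t₀ (Set.Ioi 0)) (nhds 0) := by
    have key0 : Tendsto
        (fun t => ∑' j, ((Real.exp (-(t * lam j)) - Real.exp (-(t₀ * lam j))) * a j)^2)
        (nhdsWithin t₀ (Set.Ioi 0)) (nhds (∑' _j : ℕ, (0:ℝ))) := by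
      refine tendsto_tsum_of_dominated_convergence (bound := fun j => (a j)^2)
        (coef_sq_summable w f) (fun j => ?_) ?_
      · have hc : Continuous fun t =>
          ((Real.exp (-(t * lam j)) - Real.exp (-(t₀ * lam j))) * a j)^2 :=
          ((((continuous_id.mul continuous_const).neg.rexp).sub continuous_const).mul
            continuous_const).pow 2
        have := (hc.tendsto t₀).mono_left (nhdsWithin_le_nhds (s := Set.Ioi 0))
        simpa using this
      · filter_upwards [self_mem_nhdsWithin] with t ht j
        rw [Real.norm_eq_abs, abs_of_nonneg (sq_nonneg _)]
        exact exp_diff_sq_le lam hpos t t₀ (le_of_lt (show (0:ℝ) < t from ht)) ht₀'.le j (a j)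
    simpa using key0
  have heq : ∀ᶠ t in nhdsWithin t₀ (Set.Ioi 0),
      Real.sqrt (∑' j, ((Real.exp (-(t * lam j)) - Real.exp (-(t₀ * lam j))) * a j)^2)
        = ‖heat lam w t f - heat lam w t₀ f‖ := by
    filter_upwards [self_mem_nhdsWithin] with t ht
    have ht' : (0:ℝ) ≤ t := le_of_lt ht
    have hsum : Summable fun j =>
        (Real.exp (-(t * lam j)) * a j - Real.exp (-(t₀ * lam j)) * a j)^2 := by
      refine (coef_sq_summable w f).of_nonneg_of_le (fun j => sq_nonneg _) fun j => ?_
      have := exp_diff_sq_le lam hpos t t₀ ht' ht₀'.le j (a j)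
      calc (Real.exp (-(t * lam j)) * a j - Real.exp (-(t₀ * lam j)) * a j)^2
          = ((Real.exp (-(t * lam j)) - Real.exp (-(t₀ * lam j))) * a j)^2 := by ring
        _ ≤ (a j)^2 := this
    rw [heat_eq lam w hpos t ht' f, heat_eq lam w hpos t₀ ht₀'.le f,
      ← vec_sub w _ _ _ _ hsum, norm_vec]
    congr 1
    exact tsum_congr fun j => by ring
  have := key.sqrt
  rw [Real.sqrt_zero] at this
  exact this.congr' heq
end heat
end Stmt17Aux
set_option linter.unusedSectionVars false
set_option linter.unusedVariables false
open Stmt17Aux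

noncomputable def Mker (ε lam : ℝ) : ℝ :=
  (-(1 / Real.log ε)) * ∫ t in ε..(1 / ε), t⁻¹ * Real.exp (-(t * lam))

section est
variable {ε lam : ℝ} (hε : ε ∈ Set.Ioo (0:ℝ) 1) (hl : 0 < lam)

lemma intInt_aux (lam a b : ℝ) (ha : 0 < a) (hb : 0 < b) :
    IntervalIntegrable (fun t => t⁻¹ * Real.exp (-(t * lam))) volume a b := by
  apply ContinuousOn.intervalIntegrable
  intro x hx
  have hx0 : x ≠ 0 := by
    rcases Set.mem_uIcc.mp hx with h | h
    · exact ne_of_gt (lt_of_lt_of_le ha h.1)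
    · exact ne_of_gt (lt_of_lt_of_le hb h.1)
  exact ((continuousAt_inv₀ hx0).continuousWithinAt.mul
    ((Real.continuous_exp.comp ((continuous_id.mul continuous_const).neg)).continuousWithinAt))

lemma intInt_inv (a b : ℝ) (ha : 0 < a) (hb : 0 < b) :
    IntervalIntegrable (fun t : ℝ => t⁻¹) volume a b := by
  apply ContinuousOn.intervalIntegrable
  intro x hx
  have hx0 : x ≠ 0 := by
    rcases Set.mem_uIcc.mp hx with h | h
    · exact ne_of_gt (lt_of_lt_of_le ha h.1)
    · exact ne_of_gt (lt_of_lt_of_le hb h.1)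
  exact (continuousAt_inv₀ hx0).continuousWithinAt

include hε

lemma log_neg' : Real.log ε < 0 := Real.log_neg hε.1 hε.2

lemma eps_le_inv : ε ≤ 1/ε := by
  rw [le_div_iff₀ hε.1]
  nlinarith [hε.1, hε.2]

lemma one_le_inv_eps : (1:ℝ) ≤ 1/ε := by
  rw [le_div_iff₀ hε.1]
  nlinarith [hε.2]

lemma coef_pos : 0 < -(1 / Real.log ε) :=
  neg_pos.mpr (div_neg_of_pos_of_neg one_pos (log_neg' hε))

include hl

lemma Mker_nonneg : 0 ≤ Mker ε lam := by
  apply mul_nonneg (coef_pos hε).le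
  apply intervalIntegral.integral_nonneg (eps_le_inv hε)
  intro u hu
  have hu0 : 0 < u := lt_of_lt_of_le hε.1 hu.1
  positivity

lemma Mker_le_two : Mker ε lam ≤ 2 := by
  have hc := coef_pos hε
  have h1e : (0:ℝ) < 1/ε := one_div_pos.mpr hε.1
  have hI : (∫ t in ε..(1/ε), t⁻¹ * Real.exp (-(t * lam))) ≤ ∫ t in ε..(1/ε), t⁻¹ := by
    apply intervalIntegral.integral_mono_on (eps_le_inv hε) (intInt_aux lam ε (1/ε) hε.1 h1e)
      (intInt_inv ε (1/ε) hε.1 h1e)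
    intro x hx
    have hx0 : 0 < x := lt_of_lt_of_le hε.1 hx.1
    have : Real.exp (-(x * lam)) ≤ 1 := by
      rw [Real.exp_le_one_iff]
      exact neg_nonpos.mpr (mul_nonneg hx0.le hl.le)
    calc x⁻¹ * Real.exp (-(x * lam)) ≤ x⁻¹ * 1 := by
          exact mul_le_mul_of_nonneg_left this (inv_nonneg.mpr hx0.le)
      _ = x⁻¹ := mul_one _
  have hval : (∫ t in ε..(1/ε), t⁻¹) = -2 * Real.log ε := by
    rw [integral_inv_of_pos hε.1 h1e, one_div, div_eq_mul_inv,
      Real.log_mul (inv_ne_zero (ne_of_gt hε.1)) (inv_ne_zero (ne_of_gt hε.1)), Real.log_inv]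
    ring
  have hlog : Real.log ε ≠ 0 := ne_of_lt (log_neg' hε)
  calc Mker ε lam ≤ (-(1 / Real.log ε)) * (-2 * Real.log ε) := by
        exact mul_le_mul_of_nonneg_left (hI.trans hval.le) hc.le
    _ = 2 := by field_simp
end est

section est2
variable {ε lam : ℝ} (hε : ε ∈ Set.Ioo (0:ℝ) 1) (hl : 0 < lam)
include hε hl

lemma exp_int_eq : ∫ t in (1:ℝ)..(1/ε), Real.exp (-(t*lam))
    = (Real.exp (-(1*lam)) - Real.exp (-((1/ε)*lam)))/lam := by
  have hl0 : lam ≠ 0 := ne_of_gt hl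
  have hF : ∀ t ∈ Set.uIcc (1:ℝ) (1/ε),
      HasDerivAt (fun u => -Real.exp (-(u*lam))/lam) (Real.exp (-(t*lam))) t := by
    intro t _
    have h1 : HasDerivAt (fun u : ℝ => -(u*lam)) (-lam) t := by
      exact (hasDerivAt_mul_const lam).neg
    have h3 := (h1.exp.neg).div_const lam
    refine h3.congr_deriv ?_
    rw [div_eq_iff hl0]; ring
  rw [intervalIntegral.integral_eq_sub_of_hasDerivAt hF
    ((Real.continuous_exp.comp ((continuous_id.mul continuous_const).neg)).intervalIntegrable _ _)]
  field_simp
  ring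

lemma tail_nonneg : 0 ≤ ∫ t in (1:ℝ)..(1/ε), t⁻¹ * Real.exp (-(t*lam)) := by
  apply intervalIntegral.integral_nonneg (one_le_inv_eps hε)
  intro u hu
  have : 0 < u := lt_of_lt_of_le one_pos hu.1
  positivity

lemma tail_bound : (∫ t in (1:ℝ)..(1/ε), t⁻¹ * Real.exp (-(t*lam))) ≤ 1/lam := by
  have h1e : (0:ℝ) < 1/ε := one_div_pos.mpr hε.1
  have step1 : (∫ t in (1:ℝ)..(1/ε), t⁻¹ * Real.exp (-(t*lam)))
      ≤ ∫ t in (1:ℝ)..(1/ε), Real.exp (-(t*lam)) := by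
    apply intervalIntegral.integral_mono_on (one_le_inv_eps hε)
      (intInt_aux lam 1 (1/ε) one_pos h1e)
      ((Real.continuous_exp.comp ((continuous_id.mul continuous_const).neg)).intervalIntegrable _ _)
    intro x hx
    have hx1 : (1:ℝ) ≤ x := hx.1
    have hx0 : 0 < x := lt_of_lt_of_le one_pos hx1
    have hxi : x⁻¹ ≤ 1 := inv_le_one_of_one_le₀ hx1
    exact mul_le_of_le_one_left (Real.exp_pos _).le hxi
  rw [exp_int_eq hε hl] at step1
  refine step1.trans ?_
  have hp := Real.exp_pos (-((1/ε)*lam))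
  have h2 : Real.exp (-(1*lam)) ≤ 1 := by
    rw [Real.exp_le_one_iff]; nlinarith [hl.le]
  have h1 : Real.exp (-(1*lam)) - Real.exp (-((1/ε)*lam)) ≤ 1 := by linarith
  gcongr

lemma head_bound : |∫ t in ε..(1:ℝ), (t⁻¹ * Real.exp (-(t*lam)) - t⁻¹)| ≤ lam := by
  have key := intervalIntegral.norm_integral_le_of_norm_le_const (C := lam)
    (f := fun t : ℝ => t⁻¹ * Real.exp (-(t*lam)) - t⁻¹) (a := ε) (b := 1) ?_
  · rw [Real.norm_eq_abs] at key
    refine key.trans ?_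
    have : |1 - ε| ≤ 1 := by rw [abs_le]; constructor <;> nlinarith [hε.1, hε.2]
    nlinarith [hl.le, abs_nonneg (1 - ε)]
  · intro x hx
    rw [Set.uIoc_of_le hε.2.le] at hx
    have hx0 : 0 < x := lt_trans hε.1 hx.1
    have hxe : Real.exp (-(x*lam)) ≤ 1 := by
      rw [Real.exp_le_one_iff]; exact neg_nonpos.mpr (mul_nonneg hx0.le hl.le)
    have hexp : 1 - x*lam ≤ Real.exp (-(x*lam)) := by
      have := Real.add_one_le_exp (-(x*lam)); linarith
    have hnn : 0 ≤ x⁻¹ := inv_nonneg.mpr hx0.le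
    rw [Real.norm_eq_abs, abs_le]
    constructor
    · have hle : x⁻¹ * (1 - Real.exp (-(x*lam))) ≤ lam := by
        calc x⁻¹ * (1 - Real.exp (-(x*lam))) ≤ x⁻¹ * (x * lam) := by
              apply mul_le_mul_of_nonneg_left _ hnn
              linarith
          _ = lam := by field_simp
      show -lam ≤ x⁻¹ * Real.exp (-(x*lam)) - x⁻¹
      nlinarith [hle]
    · show x⁻¹ * Real.exp (-(x*lam)) - x⁻¹ ≤ lam
      nlinarith [hl.le]

lemma Mker_sub_one : Mker ε lam - 1 = (-(1/Real.log ε)) *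
    ((∫ t in ε..(1:ℝ), (t⁻¹ * Real.exp (-(t*lam)) - t⁻¹))
      + ∫ t in (1:ℝ)..(1/ε), t⁻¹ * Real.exp (-(t*lam))) := by
  have h1e : (0:ℝ) < 1/ε := one_div_pos.mpr hε.1
  have hlog : Real.log ε ≠ 0 := ne_of_lt (log_neg' hε)
  have hsplit : (∫ t in ε..(1/ε), t⁻¹ * Real.exp (-(t*lam)))
      = (∫ t in ε..(1:ℝ), t⁻¹ * Real.exp (-(t*lam)))
        + ∫ t in (1:ℝ)..(1/ε), t⁻¹ * Real.exp (-(t*lam)) :=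
    (intervalIntegral.integral_add_adjacent_intervals
      (intInt_aux lam ε 1 hε.1 one_pos) (intInt_aux lam 1 (1/ε) one_pos h1e)).symm
  have hsub : (∫ t in ε..(1:ℝ), (t⁻¹ * Real.exp (-(t*lam)) - t⁻¹))
      = (∫ t in ε..(1:ℝ), t⁻¹ * Real.exp (-(t*lam))) - ∫ t in ε..(1:ℝ), (t:ℝ)⁻¹ :=
    intervalIntegral.integral_sub (intInt_aux lam ε 1 hε.1 one_pos)
      (intInt_inv ε 1 hε.1 one_pos)
  have hone : (∫ t in ε..(1:ℝ), (t:ℝ)⁻¹) = - Real.log ε := by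
    rw [integral_inv_of_pos hε.1 one_pos, one_div, Real.log_inv]
  rw [Mker, hsplit, hsub, hone]
  linear_combination one_div_mul_cancel hlog

lemma Mker_sub_one_abs_le : |Mker ε lam - 1| ≤ (lam + 1/lam)/(-Real.log ε) := by
  have hc := coef_pos hε
  rw [Mker_sub_one hε hl, abs_mul, abs_of_pos hc]
  have hA := head_bound hε hl
  have hB := tail_bound hε hl
  have hB0 := tail_nonneg hε hl
  have habs : |(∫ t in ε..(1:ℝ), (t⁻¹ * Real.exp (-(t*lam)) - t⁻¹))
      + ∫ t in (1:ℝ)..(1/ε), t⁻¹ * Real.exp (-(t*lam))| ≤ lam + 1/lam := by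
    refine (abs_add_le _ _).trans ?_
    rw [abs_of_nonneg hB0]
    linarith
  calc (-(1/Real.log ε)) * |(∫ t in ε..(1:ℝ), (t⁻¹ * Real.exp (-(t*lam)) - t⁻¹))
      + ∫ t in (1:ℝ)..(1/ε), t⁻¹ * Real.exp (-(t*lam))|
      ≤ (-(1/Real.log ε)) * (lam + 1/lam) := mul_le_mul_of_nonneg_left habs hc.le
    _ = (lam + 1/lam)/(-Real.log ε) := by
        rw [eq_div_iff (ne_of_gt (neg_pos.mpr (log_neg' hε)))]
        have hlog : Real.log ε ≠ 0 := ne_of_lt (log_neg' hε)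
        field_simp

end est2




noncomputable def Kfun (lam0 : ℝ) (d : ℕ) (L : ℝ) : ℝ :=
  lam0 ^ (-((d:ℝ)/2)) * ((1 + Real.sqrt L + 1/lam0)^2 / L^2)
    + (1 + Real.sqrt L) ^ (-(1:ℝ)/2)

lemma Kfun_nonneg (lam0 : ℝ) (h0 : 0 < lam0) (d : ℕ) (L : ℝ) : 0 ≤ Kfun lam0 d L := by
  unfold Kfun
  have h1 : (0:ℝ) ≤ lam0 ^ (-((d:ℝ)/2)) := Real.rpow_nonneg h0.le _
  have h2 : (0:ℝ) ≤ (1 + Real.sqrt L + 1/lam0)^2 / L^2 := by positivity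
  have h3 : (0:ℝ) ≤ (1 + Real.sqrt L) ^ (-(1:ℝ)/2) := by
    apply Real.rpow_nonneg
    nlinarith [Real.sqrt_nonneg L]
  positivity

lemma Kfun_tendsto (lam0 : ℝ) (h0 : 0 < lam0) (d : ℕ) :
    Tendsto (Kfun lam0 d) atTop (nhds 0) := by
  have hsqrt : Tendsto Real.sqrt atTop atTop := by
    have : Real.sqrt = fun x : ℝ => x ^ ((1:ℝ)/2) := funext Real.sqrt_eq_rpow
    rw [this]
    exact tendsto_rpow_atTop (by norm_num)
  have hbase : Tendsto (fun L : ℝ => 1 + Real.sqrt L) atTop atTop :=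
    tendsto_atTop_add_const_left _ 1 hsqrt
  have hterm2 : Tendsto (fun L : ℝ => (1 + Real.sqrt L) ^ (-(1:ℝ)/2)) atTop (nhds 0) := by
    have := (tendsto_rpow_neg_atTop (y := 1/2) (by norm_num)).comp hbase
    simpa [neg_div, Function.comp_def] using this
  have hquot : Tendsto (fun L : ℝ => (1 + Real.sqrt L + 1/lam0) / L) atTop (nhds 0) := by
    have hx : Tendsto (fun L : ℝ => (1 + 1/lam0) * L⁻¹ + (Real.sqrt L)⁻¹) atTop (nhds 0) := by
      have hA : Tendsto (fun L : ℝ => (1 + 1/lam0) * L⁻¹) atTop (nhds 0) := by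
        simpa using (tendsto_inv_atTop_zero (𝕜 := ℝ)).const_mul (1 + 1/lam0)
      have hB : Tendsto (fun L : ℝ => (Real.sqrt L)⁻¹) atTop (nhds 0) :=
        hsqrt.inv_tendsto_atTop
      simpa using hA.add hB
    refine hx.congr' ?_
    filter_upwards [eventually_gt_atTop (0:ℝ)] with L hL
    have hs : Real.sqrt L * Real.sqrt L = L := Real.mul_self_sqrt hL.le
    have hsp : 0 < Real.sqrt L := Real.sqrt_pos.mpr hL
    have h1 : Real.sqrt L / L = (Real.sqrt L)⁻¹ := by
      rw [div_eq_iff (ne_of_gt hL)]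
      field_simp
      exact Real.sq_sqrt hL.le
    rw [← h1]
    ring
  have hterm1 : Tendsto
      (fun L : ℝ => lam0 ^ (-((d:ℝ)/2)) * ((1 + Real.sqrt L + 1/lam0)^2 / L^2))
      atTop (nhds 0) := by
    have hq2 : Tendsto (fun L : ℝ => ((1 + Real.sqrt L + 1/lam0) / L)^2) atTop (nhds 0) := by
      have := hquot.pow 2
      simpa using this
    have heq : (fun L : ℝ => ((1 + Real.sqrt L + 1/lam0) / L)^2)
        = fun L : ℝ => (1 + Real.sqrt L + 1/lam0)^2 / L^2 := by
      funext L; rw [div_pow]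
    rw [heq] at hq2
    simpa using hq2.const_mul (lam0 ^ (-((d:ℝ)/2)))
  have htot := hterm1.add hterm2
  rw [add_zero] at htot
  exact htot

lemma pointwise_bound {ε lam0 lamj : ℝ} (hε : ε ∈ Set.Ioo (0:ℝ) 1) {d : ℕ} (hd : 1 ≤ d)
    (h0 : 0 < lam0) (hj0 : lam0 ≤ lamj) :
    (Mker ε lamj - 1)^2 ≤ Kfun lam0 d (-Real.log ε) * lamj ^ ((d:ℝ)/2) := by
  set L := -Real.log ε with hLdef
  have hLpos : 0 < L := neg_pos.mpr (log_neg' hε)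
  have hlj : 0 < lamj := lt_of_lt_of_le h0 hj0
  have hsq := Real.sqrt_nonneg L
  set lstar := 1 + Real.sqrt L with hlstar
  have hlstar1 : (1:ℝ) ≤ lstar := by rw [hlstar]; nlinarith
  have hlstar0 : (0:ℝ) < lstar := lt_of_lt_of_le one_pos hlstar1
  have term2_nonneg : 0 ≤ lstar ^ (-(1:ℝ)/2) := Real.rpow_nonneg hlstar0.le _
  have hr0 : (0:ℝ) ≤ lam0 ^ (-((d:ℝ)/2)) := Real.rpow_nonneg h0.le _
  have term1_nonneg : 0 ≤ lam0 ^ (-((d:ℝ)/2)) * ((1 + Real.sqrt L + 1/lam0)^2 / L^2) := by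
    positivity
  have hKsplit : Kfun lam0 d L
      = lam0 ^ (-((d:ℝ)/2)) * ((1 + Real.sqrt L + 1/lam0)^2 / L^2) + lstar ^ (-(1:ℝ)/2) := rfl
  have hpow_mono : lam0 ^ ((d:ℝ)/2) ≤ lamj ^ ((d:ℝ)/2) :=
    Real.rpow_le_rpow h0.le hj0 (by positivity)
  rcases le_total lamj lstar with hcase | hcase
  · have h1 := Mker_sub_one_abs_le hε hlj
    have h2 : (lamj + 1/lamj)/L ≤ (lstar + 1/lam0)/L := by
      gcongr
    have habs : |Mker ε lamj - 1| ≤ (lstar + 1/lam0)/L := h1.trans h2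
    have h3 : (Mker ε lamj - 1)^2 ≤ ((lstar + 1/lam0)/L)^2 := by
      calc (Mker ε lamj - 1)^2 = |Mker ε lamj - 1|^2 := (sq_abs _).symm
        _ ≤ ((lstar + 1/lam0)/L)^2 := pow_le_pow_left₀ (abs_nonneg _) habs 2
    have hone : lam0 ^ (-((d:ℝ)/2)) * lam0 ^ ((d:ℝ)/2) = 1 := by
      rw [← Real.rpow_add h0]; simp
    have key : ((lstar + 1/lam0)/L)^2
        = (lam0 ^ (-((d:ℝ)/2)) * ((1 + Real.sqrt L + 1/lam0)^2 / L^2)) * lam0 ^ ((d:ℝ)/2) := by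
      rw [div_pow, hlstar]
      calc (1 + Real.sqrt L + 1/lam0)^2 / L^2
          = ((1 + Real.sqrt L + 1/lam0)^2 / L^2) * (lam0 ^ (-((d:ℝ)/2)) * lam0 ^ ((d:ℝ)/2)) := by
            rw [hone, mul_one]
        _ = _ := by ring
    refine h3.trans ?_
    rw [key]
    apply mul_le_mul ?_ hpow_mono (Real.rpow_nonneg h0.le _) (Kfun_nonneg lam0 h0 d L)
    rw [hKsplit]
    linarith
  · have hn := Mker_nonneg hε hlj
    have ht2 := Mker_le_two hε hlj
    have h1 : |Mker ε lamj - 1| ≤ 1 := by rw [abs_le]; constructor <;> linarith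
    have hlam1 : (1:ℝ) ≤ lamj := le_trans hlstar1 hcase
    have h2 : (Mker ε lamj - 1)^2 ≤ 1 := by
      rw [← sq_abs]
      nlinarith [abs_nonneg (Mker ε lamj - 1)]
    have h3 : lstar ^ ((1:ℝ)/2) ≤ lamj ^ ((d:ℝ)/2) := by
      calc lstar ^ ((1:ℝ)/2) ≤ lamj ^ ((1:ℝ)/2) :=
            Real.rpow_le_rpow hlstar0.le hcase (by norm_num)
        _ ≤ lamj ^ ((d:ℝ)/2) := by
            apply Real.rpow_le_rpow_of_exponent_le hlam1
            have : (1:ℝ) ≤ (d:ℝ) := by exact_mod_cast hd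
            linarith
    have h4 : (1:ℝ) ≤ lstar ^ (-(1:ℝ)/2) * lamj ^ ((d:ℝ)/2) := by
      have hspl : lstar ^ (-(1:ℝ)/2) * lstar ^ ((1:ℝ)/2) = 1 := by
        rw [← Real.rpow_add hlstar0]; norm_num
      calc (1:ℝ) = lstar ^ (-(1:ℝ)/2) * lstar ^ ((1:ℝ)/2) := hspl.symm
        _ ≤ lstar ^ (-(1:ℝ)/2) * lamj ^ ((d:ℝ)/2) :=
            mul_le_mul_of_nonneg_left h3 term2_nonneg
    refine h2.trans (h4.trans ?_)
    apply mul_le_mul_of_nonneg_right ?_ (Real.rpow_nonneg hlj.le _)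
    rw [hKsplit]
    linarith

section jreg
variable {H : Type*} [NormedAddCommGroup H] [InnerProductSpace ℝ H] [CompleteSpace H]
variable (lam : ℕ → ℝ) (w : HilbertBasis ℕ ℝ H) (hpos : ∀ j, 0 < lam j)
include hpos

lemma inner_Jreg {ε : ℝ} (hε : ε ∈ Set.Ioo (0:ℝ) 1) (f : H) (j : ℕ) :
    (inner ℝ (w j) (Jreg lam w ε f) : ℝ) = Mker ε (lam j) * (inner ℝ (w j) f : ℝ) := by
  have h1e : (0:ℝ) < 1/ε := one_div_pos.mpr hε.1
  have hsub : Set.uIcc ε (1/ε) ⊆ Set.Ioi (0:ℝ) := by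
    rw [Set.uIcc_of_le (eps_le_inv hε)]
    intro x hx
    exact lt_of_lt_of_le hε.1 hx.1
  have hcont : ContinuousOn (fun t => t⁻¹ • heat lam w t f) (Set.uIcc ε (1/ε)) := by
    apply ContinuousOn.smul
    · intro x hx
      exact (continuousAt_inv₀ (ne_of_gt (hsub hx))).continuousWithinAt
    · exact (continuousOn_heat lam w hpos f).mono hsub
  have hint : IntervalIntegrable (fun t => t⁻¹ • heat lam w t f) volume ε (1/ε) :=
    hcont.intervalIntegrable
  rw [Jreg, real_inner_smul_right]
  have hswap := (innerSL ℝ (w j)).intervalIntegral_comp_comm hint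
  have hstep : (inner ℝ (w j) (∫ t in ε..(1/ε), t⁻¹ • heat lam w t f) : ℝ)
      = ∫ t in ε..(1/ε), t⁻¹ * (Real.exp (-(t * lam j)) * (inner ℝ (w j) f : ℝ)) := by
    rw [← innerSL_apply_apply (𝕜 := ℝ), ← hswap]
    apply intervalIntegral.integral_congr
    intro t ht
    have ht0 : (0:ℝ) < t := hsub ht
    show (innerSL ℝ (w j)) (t⁻¹ • heat lam w t f)
      = t⁻¹ * (Real.exp (-(t * lam j)) * (inner ℝ (w j) f : ℝ))
    rw [innerSL_apply_apply, real_inner_smul_right, inner_heat lam w hpos t ht0.le f j]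
  rw [hstep]
  have hpull : (∫ t in ε..(1/ε), t⁻¹ * (Real.exp (-(t * lam j)) * (inner ℝ (w j) f : ℝ)))
      = (∫ t in ε..(1/ε), t⁻¹ * Real.exp (-(t * lam j))) * (inner ℝ (w j) f : ℝ) := by
    rw [← intervalIntegral.integral_mul_const]
    apply intervalIntegral.integral_congr
    intro t ht
    ring
  rw [hpull, Mker]
  ring

lemma rpow_sq_aux (j : ℕ) (r : ℝ) : ((lam j) ^ r)^2 = (lam j) ^ (2*r) := by
  rw [← Real.rpow_natCast ((lam j) ^ r) 2, ← Real.rpow_mul (hpos j).le]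
  norm_num [mul_comm]

lemma Lam_sq_summable {s : ℝ} {g : H} (hg : memDom lam w s g) :
    Summable fun j => ((lam j) ^ (s/2) * (inner ℝ (w j) g : ℝ))^2 := by
  refine hg.congr fun j => ?_
  rw [mul_pow, rpow_sq_aux lam hpos j (s/2), show (2:ℝ)*(s/2) = s by ring]

lemma Lam_eq {s : ℝ} {g : H} (hg : memDom lam w s g) :
    Lam lam w s g = vec w (fun j => (lam j) ^ (s/2) * (inner ℝ (w j) g : ℝ))
      (Lam_sq_summable lam w hpos hg) :=
  (hasSum_vec w _ _).tsum_eq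

lemma norm_Lam_sq {s : ℝ} {g : H} (hg : memDom lam w s g) :
    ‖Lam lam w s g‖ ^ 2 = ∑' j, (lam j) ^ s * (inner ℝ (w j) g : ℝ)^2 := by
  rw [Lam_eq lam w hpos hg, norm_vec_sq]
  refine tsum_congr fun j => ?_
  rw [mul_pow, rpow_sq_aux lam hpos j (s/2), show (2:ℝ)*(s/2) = s by ring]

end jreg


/-- Let `d ≥ 1` be an integer with `λ_j ≥ c j^{2/d}` for some `c > 0` and all `j`
(here `lam j` stands for `λ_{j+1}`), and let `s ≥ 0`. Then there exists
`κ : (0,1) → [0,∞)` with `κ(ε) → 0` as `ε → 0⁺` such that for every `ε ∈ (0,1)` and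
every `f ∈ 𝒟(Λ^{2s+d})`, `J_ε f - f ∈ 𝒟(Λ^s)` and
`‖Λ^s (J_ε f - f)‖ ≤ κ(ε) ‖f‖^{1/2} ‖Λ^{2s+d} f‖^{1/2}`. -/
theorem stmt_17 (lam : ℕ → ℝ) (w : HilbertBasis ℕ ℝ H)
    (hpos : ∀ j, 0 < lam j) (hmono : Monotone lam)
    (htop : Tendsto lam atTop atTop)
    (d : ℕ) (hd : 1 ≤ d) (c : ℝ) (hc : 0 < c)
    (hgrow : ∀ j : ℕ, c * ((j : ℝ) + 1) ^ (2 / (d : ℝ)) ≤ lam j)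
    (s : ℝ) (hs : 0 ≤ s) :
    ∃ κ : ℝ → ℝ, (∀ ε ∈ Set.Ioo (0 : ℝ) 1, 0 ≤ κ ε) ∧
      Tendsto κ (nhdsWithin 0 (Set.Ioi 0)) (nhds 0) ∧
      ∀ ε ∈ Set.Ioo (0 : ℝ) 1, ∀ f : H, memDom lam w (2 * s + d) f →
        memDom lam w s (Jreg lam w ε f - f) ∧
        ‖Lam lam w s (Jreg lam w ε f - f)‖
          ≤ κ ε * ‖f‖ ^ ((1 : ℝ) / 2) * ‖Lam lam w (2 * s + d) f‖ ^ ((1 : ℝ) / 2) := by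
  classical
  have h00 : 0 < lam 0 := hpos 0
  refine ⟨fun ε => Real.sqrt (Kfun (lam 0) d (-Real.log ε)),
    fun ε _ => Real.sqrt_nonneg _, ?_, ?_⟩
  · have hneg : Tendsto (fun ε : ℝ => -Real.log ε) (nhdsWithin 0 (Set.Ioi 0)) atTop :=
      tendsto_neg_atBot_atTop.comp Real.tendsto_log_nhdsGT_zero
    have h1 := (Kfun_tendsto (lam 0) h00 d).comp hneg
    have h2 := h1.sqrt
    rw [Real.sqrt_zero] at h2
    simpa [Function.comp] using h2
  · intro ε hε f hf
    set a : ℕ → ℝ := fun j => (inner ℝ (w j) f : ℝ) with ha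
    have hA : Summable fun j => (a j)^2 := coef_sq_summable w f
    set K := Kfun (lam 0) d (-Real.log ε) with hK
    have hKnn : 0 ≤ K := Kfun_nonneg (lam 0) h00 d _
    have hb : ∀ j, (inner ℝ (w j) (Jreg lam w ε f - f) : ℝ) = (Mker ε (lam j) - 1) * a j := by
      intro j
      rw [inner_sub_right, inner_Jreg lam w hpos hε f j]
      ring
    have hptw : ∀ j, (lam j)^s * ((inner ℝ (w j) (Jreg lam w ε f - f) : ℝ))^2
        ≤ K * ((lam j) ^ (s + (d:ℝ)/2) * (a j)^2) := by
      intro j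
      have hpb := pointwise_bound hε hd h00 (hmono (Nat.zero_le j))
      rw [hb j]
      have hnn : 0 ≤ (lam j)^s * (a j)^2 :=
        mul_nonneg (Real.rpow_nonneg (hpos j).le s) (sq_nonneg _)
      calc (lam j)^s * ((Mker ε (lam j) - 1) * a j)^2
          = (Mker ε (lam j) - 1)^2 * ((lam j)^s * (a j)^2) := by ring
        _ ≤ (K * (lam j) ^ ((d:ℝ)/2)) * ((lam j)^s * (a j)^2) :=
            mul_le_mul_of_nonneg_right hpb hnn
        _ = K * ((lam j) ^ (s + (d:ℝ)/2) * (a j)^2) := by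
            rw [Real.rpow_add (hpos j)]
            ring
    have hf' : Summable fun j => (lam j) ^ (2*s + (d:ℝ)) * (a j)^2 := hf
    have hsq_exp : ∀ j, ((lam j) ^ (s + (d:ℝ)/2))^2 = (lam j) ^ (2*s + (d:ℝ)) := by
      intro j
      rw [rpow_sq_aux lam hpos j _, show 2*(s+(d:ℝ)/2) = 2*s + (d:ℝ) by ring]
    have hmid : Summable fun j => (lam j) ^ (s + (d:ℝ)/2) * (a j)^2 := by
      have hle : ∀ j, (lam j) ^ (s + (d:ℝ)/2) * (a j)^2
          ≤ ((a j)^2 + (lam j) ^ (2*s + (d:ℝ)) * (a j)^2)/2 := by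
        intro j
        have h1 := hsq_exp j
        nlinarith [sq_nonneg ((lam j) ^ (s + (d:ℝ)/2) - 1), sq_nonneg (a j),
          Real.rpow_nonneg (hpos j).le (s + (d:ℝ)/2)]
      refine Summable.of_nonneg_of_le (fun j =>
        mul_nonneg (Real.rpow_nonneg (hpos j).le _) (sq_nonneg _)) hle ?_
      simpa using (hA.add hf').div_const 2
    have hdom : memDom lam w s (Jreg lam w ε f - f) := by
      refine Summable.of_nonneg_of_le (fun j =>
        mul_nonneg (Real.rpow_nonneg (hpos j).le s) (sq_nonneg _)) hptw (hmid.mul_left K)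
    refine ⟨hdom, ?_⟩
    set T2 := ∑' j, (a j)^2 with hT2
    set T3 := ∑' j, (lam j) ^ (2*s + (d:ℝ)) * (a j)^2 with hT3
    have hT2nn : 0 ≤ T2 := tsum_nonneg fun j => sq_nonneg _
    have hT3nn : 0 ≤ T3 := tsum_nonneg fun j =>
      mul_nonneg (Real.rpow_nonneg (hpos j).le _) (sq_nonneg _)
    have hCS : (∑' j, (lam j) ^ (s + (d:ℝ)/2) * (a j)^2) ≤ Real.sqrt T2 * Real.sqrt T3 := by
      refine Summable.tsum_le_of_sum_le hmid fun F => ?_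
      have hcs := Real.sum_mul_le_sqrt_mul_sqrt F (fun j => |a j|)
        (fun j => (lam j) ^ (s + (d:ℝ)/2) * |a j|)
      have e1 : (∑ j ∈ F, |a j| * ((lam j) ^ (s + (d:ℝ)/2) * |a j|))
          = ∑ j ∈ F, (lam j) ^ (s + (d:ℝ)/2) * (a j)^2 := by
        refine Finset.sum_congr rfl fun j _ => ?_
        rw [sq, ← abs_mul_abs_self (a j)]
        ring
      have e2 : (∑ j ∈ F, (|a j|)^2) = ∑ j ∈ F, (a j)^2 := by
        refine Finset.sum_congr rfl fun j _ => sq_abs _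
      have e3 : (∑ j ∈ F, ((lam j) ^ (s + (d:ℝ)/2) * |a j|)^2)
          = ∑ j ∈ F, (lam j) ^ (2*s + (d:ℝ)) * (a j)^2 := by
        refine Finset.sum_congr rfl fun j _ => ?_
        rw [mul_pow, sq_abs, hsq_exp j]
      rw [e1, e2, e3] at hcs
      refine hcs.trans ?_
      have hs2 : (∑ j ∈ F, (a j)^2) ≤ T2 :=
        Summable.sum_le_tsum F (fun j _ => sq_nonneg _) hA
      have hs3 : (∑ j ∈ F, (lam j) ^ (2*s + (d:ℝ)) * (a j)^2) ≤ T3 :=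
        Summable.sum_le_tsum F (fun j _ =>
          mul_nonneg (Real.rpow_nonneg (hpos j).le _) (sq_nonneg _)) hf'
      have hm2 : Real.sqrt (∑ j ∈ F, (a j)^2) ≤ Real.sqrt T2 := Real.sqrt_le_sqrt hs2
      have hm3 : Real.sqrt (∑ j ∈ F, (lam j) ^ (2*s + (d:ℝ)) * (a j)^2) ≤ Real.sqrt T3 :=
        Real.sqrt_le_sqrt hs3
      exact mul_le_mul hm2 hm3 (Real.sqrt_nonneg _) (Real.sqrt_nonneg _)
    have hT1 : ‖Lam lam w s (Jreg lam w ε f - f)‖^2 ≤ K * (Real.sqrt T2 * Real.sqrt T3) := by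
      rw [norm_Lam_sq lam w hpos hdom]
      calc (∑' j, (lam j)^s * ((inner ℝ (w j) (Jreg lam w ε f - f) : ℝ))^2)
          ≤ ∑' j, K * ((lam j) ^ (s + (d:ℝ)/2) * (a j)^2) :=
            Summable.tsum_le_tsum hptw hdom (hmid.mul_left K)
        _ = K * ∑' j, (lam j) ^ (s + (d:ℝ)/2) * (a j)^2 := tsum_mul_left
        _ ≤ K * (Real.sqrt T2 * Real.sqrt T3) := mul_le_mul_of_nonneg_left hCS hKnn
    have hnormf : Real.sqrt T2 = ‖f‖ := by
      rw [hT2, ← norm_sq_eq_tsum w f, Real.sqrt_sq (norm_nonneg f)]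
    have hnormL : Real.sqrt T3 = ‖Lam lam w (2*s + (d:ℝ)) f‖ := by
      rw [hT3, ← norm_Lam_sq lam w hpos hf, Real.sqrt_sq (norm_nonneg _)]
    have goal_sq : ‖Lam lam w s (Jreg lam w ε f - f)‖
        ≤ Real.sqrt (K * (Real.sqrt T2 * Real.sqrt T3)) := by
      rw [← Real.sqrt_sq (norm_nonneg (Lam lam w s (Jreg lam w ε f - f)))]
      exact Real.sqrt_le_sqrt hT1
    refine goal_sq.trans ?_
    rw [Real.sqrt_mul hKnn, Real.sqrt_mul (Real.sqrt_nonneg T2), hnormf, hnormL,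
      Real.sqrt_eq_rpow ‖f‖, Real.sqrt_eq_rpow ‖Lam lam w (2*s + (d:ℝ)) f‖]
    exact le_of_eq (by ring)
end
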